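/- arXiv:2110.07823 — 12 statements merged into one kernel-verified Lean document; each statement's English description precedes it below -/
import Mathlib

section
/- Let N_d and N_p be coprime positive integers. For all real numbers ΔΩ and ΔM, there exists a real number τ such that ΔΩ ≡ −2π N_d τ (mod 2π) and ΔM ≡ 2π N_p τ (mod 2π) if and only if N_p·ΔΩ + N_d·ΔM ≡ 0 (mod 2π). -/
/-!
The pair `(ΔΩ, ΔM)` is reached at time `τ` exactly when `t = 2πτ` solves the simultaneous
congruences `-N_d t ≡ ΔΩ`, `N_p t ≡ ΔM` modulo `2π`. Eliminating `t` gives the necessary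
condition `N_p ΔΩ + N_d ΔM ≡ 0`; conversely, from a Bézout relation `u a + v b = 1` for the
coefficients, `t = u x + v y` solves `a t ≡ x`, `b t ≡ y` as soon as `b x ≡ a y`.
-/

open Real AddCommGroup

theorem AddCommGroup.exists_zsmul_modEq_and_zsmul_modEq_iff {G : Type*} [AddCommGroup G]
    {p x y : G} {a b : ℤ} (hab : IsCoprime a b) :
    (∃ t : G, a • t ≡ x [PMOD p] ∧ b • t ≡ y [PMOD p]) ↔ b • x ≡ a • y [PMOD p] := by
  constructor
  · rintro ⟨t, hx, hy⟩
    calc b • x ≡ b • a • t [PMOD p] := hx.symm.zsmul.of_zsmul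
      _ = a • b • t := zsmul_comm ..
      _ ≡ a • y [PMOD p] := hy.zsmul.of_zsmul
  · intro h
    obtain ⟨m, hm⟩ := modEq_iff_zsmul'.mp h
    obtain ⟨u, v, huv⟩ := hab
    refine ⟨u • x + v • y, modEq_iff_zsmul'.mpr ⟨-(v * m), ?_⟩,
      modEq_iff_zsmul'.mpr ⟨u * m, ?_⟩⟩
    · linear_combination (norm := module) (-v) • hm - huv • x
    · linear_combination (norm := module) u • hm - huv • y

theorem same_relative_trajectory_prograde_general
    (Nd Np : ℕ) (hcop : Nat.Coprime Nd Np) :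
    ∀ ΔΩ ΔM : ℝ,
      (∃ τ : ℝ, (∃ k : ℤ, ΔΩ - (-(2 * π * Nd * τ)) = 2 * π * k) ∧
                (∃ k : ℤ, ΔM - 2 * π * Np * τ = 2 * π * k)) ↔
      (∃ k : ℤ, Np * ΔΩ + Nd * ΔM = 2 * π * k) := by
  intro ΔΩ ΔM
  have hcongr := exists_zsmul_modEq_and_zsmul_modEq_iff (p := 2 * π) (x := ΔΩ) (y := ΔM)
    (Nat.isCoprime_iff_coprime.mpr hcop).neg_left
  rw [(mul_left_surjective₀ (by positivity : 2 * π ≠ 0)).exists, ← sub_modEq_zero,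
    modEq_zero_iff_eq_zsmul] at hcongr
  simp only [modEq_iff_zsmul', zsmul_eq_mul, Int.cast_comm] at hcongr
  convert hcongr using 7
  all_goals push_cast; ring

/-- Theorem 1 (prograde frame): two positions lie on the same relative trajectory,
i.e. there is a normalized time `τ` with `ΔΩ ≡ -2π N_d τ` and `ΔM ≡ 2π N_p τ` (mod 2π),
iff `N_p ΔΩ + N_d ΔM ≡ 0 (mod 2π)`. -/
theorem same_relative_trajectory_prograde
    (Nd Np : ℕ) (hNd : 0 < Nd) (hNp : 0 < Np) (hcop : Nat.Coprime Nd Np) :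
    ∀ ΔΩ ΔM : ℝ,
      (∃ τ : ℝ, (∃ k : ℤ, ΔΩ - (-(2 * π * Nd * τ)) = 2 * π * k) ∧
                (∃ k : ℤ, ΔM - 2 * π * Np * τ = 2 * π * k)) ↔
      (∃ k : ℤ, Np * ΔΩ + Nd * ΔM = 2 * π * k) :=
  same_relative_trajectory_prograde_general Nd Np hcop
end

section
/- Let N_d and N_p be coprime positive integers. For all real numbers ΔΩ and ΔM, there exists a real number τ such that ΔΩ ≡ 2π N_d τ (mod 2π) and ΔM ≡ 2π N_p τ (mod 2π) if and only if N_p·ΔΩ − N_d·ΔM ≡ 0 (mod 2π). -/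
/-!
Read modulo `2π`, i.e. in `Real.Angle`, the claim is that in an abelian group a pair `(x, y)` has
the form `(a • t, b • t)` for coprime `a, b` iff `b • x = a • y`. For the converse, a Bézout
relation `u * a + v * b = 1` gives the witness `t = u • x + v • y`.
-/

open Real

theorem exists_zsmul_eq_and_zsmul_eq_iff {G : Type*} [AddCommGroup G] {a b : ℤ}
    (hab : IsCoprime a b) (x y : G) :
    (∃ t : G, x = a • t ∧ y = b • t) ↔ b • x = a • y := by
  constructor
  · rintro ⟨t, rfl, rfl⟩
    rw [smul_smul, smul_smul, mul_comm]
  · intro h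
    obtain ⟨u, v, huv⟩ := hab
    refine ⟨u • x + v • y, ?_, ?_⟩
    · linear_combination (norm := module) v • h - huv • x
    · linear_combination (norm := module) -u • h - huv • y

theorem Real.Angle.surjective_coe_two_pi_mul :
    Function.Surjective fun τ : ℝ => ((2 * π * τ : ℝ) : Angle) := by
  intro θ
  induction θ using Real.Angle.induction_on with
  | _ x => exact ⟨x / (2 * π), congrArg _ (mul_div_cancel₀ x two_pi_pos.ne')⟩

theorem same_relative_trajectory_retrograde_general
    (Nd Np : ℕ) (hcop : Nat.Coprime Nd Np) :
    ∀ ΔΩ ΔM : ℝ,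
      (∃ τ : ℝ, (∃ k : ℤ, ΔΩ - 2 * π * Nd * τ = 2 * π * k) ∧
                (∃ k : ℤ, ΔM - 2 * π * Np * τ = 2 * π * k)) ↔
      (∃ k : ℤ, Np * ΔΩ - Nd * ΔM = 2 * π * k) := by
  intro ΔΩ ΔM
  simp only [← Angle.angle_eq_iff_two_pi_dvd_sub, Angle.natCast_mul_eq_nsmul,
    show ∀ (n : ℕ) (τ : ℝ), 2 * π * n * τ = n * (2 * π * τ) by intros; ring]
  have hcop' : IsCoprime (Nd : ℤ) Np := Nat.isCoprime_iff_coprime.mpr hcop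
  simpa only [natCast_zsmul] using Angle.surjective_coe_two_pi_mul.exists.symm.trans
    (exists_zsmul_eq_and_zsmul_eq_iff hcop' (ΔΩ : Angle) ΔM)

/-- Theorem 1 (retrograde frame): two positions lie on the same relative trajectory,
i.e. there is a normalized time `τ` with `ΔΩ ≡ 2π N_d τ` and `ΔM ≡ 2π N_p τ` (mod 2π),
iff `N_p ΔΩ - N_d ΔM ≡ 0 (mod 2π)`. -/
theorem same_relative_trajectory_retrograde
    (Nd Np : ℕ) (hNd : 0 < Nd) (hNp : 0 < Np) (hcop : Nat.Coprime Nd Np) :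
    ∀ ΔΩ ΔM : ℝ,
      (∃ τ : ℝ, (∃ k : ℤ, ΔΩ - 2 * π * Nd * τ = 2 * π * k) ∧
                (∃ k : ℤ, ΔM - 2 * π * Np * τ = 2 * π * k)) ↔
      (∃ k : ℤ, Np * ΔΩ - Nd * ΔM = 2 * π * k) :=
  same_relative_trajectory_retrograde_general Nd Np hcop
end

section
/- Let N_d ≥ 2 be an integer, let N_p = N_d − 1, and let i be a real number with cos i > N_p/N_d. Then the relative trajectory p in a prograde rotating frame is injective on [0,1); i.e., the relative trajectory is non-self-intersecting. -/
/-!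
Identify the horizontal plane with `ℂ` and put `z = exp (-2πiτ)`. Writing the tilted circle as
a sum of two counter-rotating circles, the horizontal projection of the trajectory is
`(1 + cos i)/2 • z + (1 - cos i)/2 • z ^ (2 N_p + 1)`. On the unit circle
`‖z ^ n - w ^ n‖ ≤ n ‖z - w‖`, so this map is injective as soon as
`(2 N_p + 1) (1 - cos i) < 1 + cos i`, which is exactly `cos i > N_p / N_d`; and `τ ↦ z` is
injective on `[0, 1)`.
-/

open Real

/-- The relative trajectory in a prograde rotating frame: ascending node longitude
`Θ = -2π N_d τ`, argument of latitude `u = 2π N_p τ`, inclination `i`, unit radius. -/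
noncomputable def progradeTrajectory (Nd Np : ℕ) (i : ℝ) (τ : ℝ) : ℝ × ℝ × ℝ :=
  let Θ : ℝ := -(2 * π * Nd * τ)
  let u : ℝ := 2 * π * Np * τ
  (Real.cos Θ * Real.cos u - Real.sin Θ * Real.sin u * Real.cos i,
   Real.sin Θ * Real.cos u + Real.cos Θ * Real.sin u * Real.cos i,
   Real.sin u * Real.sin i)

theorem norm_pow_sub_pow_le_of_norm_le_one {R : Type*} [NormedCommRing R] [NormOneClass R]
    {x y : R} (hx : ‖x‖ ≤ 1) (hy : ‖y‖ ≤ 1) (n : ℕ) : ‖x ^ n - y ^ n‖ ≤ n * ‖x - y‖ := by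
  have hpow {z : R} (hz : ‖z‖ ≤ 1) (k : ℕ) : ‖z ^ k‖ ≤ 1 :=
    (norm_pow_le z k).trans (pow_le_one₀ (norm_nonneg z) hz)
  have hterm (k l : ℕ) : ‖x ^ k * y ^ l‖ ≤ 1 :=
    (norm_mul_le _ _).trans (mul_le_one₀ (hpow hx k) (norm_nonneg _) (hpow hy l))
  calc ‖x ^ n - y ^ n‖
      = ‖(∑ k ∈ Finset.range n, x ^ k * y ^ (n - 1 - k)) * (x - y)‖ := by rw [geom_sum₂_mul]
    _ ≤ ‖∑ k ∈ Finset.range n, x ^ k * y ^ (n - 1 - k)‖ * ‖x - y‖ := norm_mul_le _ _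
    _ ≤ n * ‖x - y‖ := by
      gcongr
      simpa using norm_sum_le_of_le (Finset.range n) fun k _ ↦ hterm k (n - 1 - k)

theorem injOn_smul_add_smul_pow {R : Type*} [NormedCommRing R] [NormOneClass R]
    [NormedAlgebra ℝ R] {a b : ℝ} {n : ℕ} (hb : 0 ≤ b) (hab : n * b < a) :
    Set.InjOn (fun x : R ↦ a • x + b • x ^ n) (Metric.closedBall 0 1) := by
  intro x hx y hy hxy
  rw [mem_closedBall_zero_iff] at hx hy
  have ha : 0 ≤ a := (mul_nonneg n.cast_nonneg hb).trans hab.le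
  have hnorm : a * ‖x - y‖ = b * ‖y ^ n - x ^ n‖ := by
    rw [← Real.norm_of_nonneg ha, ← Real.norm_of_nonneg hb, ← norm_smul, ← norm_smul,
      smul_sub, smul_sub]
    congr 1
    linear_combination hxy
  have hle : a * ‖x - y‖ ≤ n * b * ‖x - y‖ := by
    rw [hnorm, norm_sub_rev x y, mul_comm (n : ℝ) b, mul_assoc]
    exact mul_le_mul_of_nonneg_left (norm_pow_sub_pow_le_of_norm_le_one hy hx n) hb
  have : ‖x - y‖ = 0 := by nlinarith [norm_nonneg (x - y)]
  exact sub_eq_zero.mp (norm_eq_zero.mp this)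

def planarProjection (v : ℝ × ℝ × ℝ) : ℂ := ⟨v.1, v.2.1⟩

theorem mk_eq_smul_exp_add_add_smul_exp_sub (c Θ u : ℝ) :
    (⟨cos Θ * cos u - sin Θ * sin u * c, sin Θ * cos u + cos Θ * sin u * c⟩ : ℂ) =
      ((1 + c) / 2) • (Circle.exp (Θ + u) : ℂ) + ((1 - c) / 2) • (Circle.exp (Θ - u) : ℂ) := by
  apply Complex.ext <;>
    simp only [Complex.add_re, Complex.add_im, Complex.real_smul, Complex.re_ofReal_mul,
      Complex.im_ofReal_mul, Circle.coe_exp, Complex.exp_ofReal_mul_I_re,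
      Complex.exp_ofReal_mul_I_im, cos_add, cos_sub, sin_add, sin_sub] <;> ring

theorem planarProjection_progradeTrajectory_succ (Np : ℕ) (i τ : ℝ) :
    planarProjection (progradeTrajectory (Np + 1) Np i τ) =
      ((1 + cos i) / 2) • (Circle.exp (-(2 * π * τ)) : ℂ) +
        ((1 - cos i) / 2) • (Circle.exp (-(2 * π * τ)) : ℂ) ^ (2 * Np + 1) := by
  rw [← Circle.coe_pow, ← Circle.exp_natCast_mul]
  refine (mk_eq_smul_exp_add_add_smul_exp_sub (cos i) (-(2 * π * (Np + 1 : ℕ) * τ))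
    (2 * π * Np * τ)).trans ?_
  congr 4 <;> push_cast <;> ring

/-- Theorem 2, sufficiency, case `α > 0`, `N_p = N_d - 1`: if `cos i > N_p/N_d`,
the prograde relative trajectory is non-self-intersecting. -/
theorem prograde_injOn_of_cos_gt (Nd Np : ℕ) (hNd : 2 ≤ Nd) (hNp : Np = Nd - 1)
    (i : ℝ) (hi : (Np : ℝ) / Nd < Real.cos i) :
    Set.InjOn (progradeTrajectory Nd Np i) (Set.Ico 0 1) := by
  obtain rfl : Nd = Np + 1 := by omega
  have hcoef : ((2 * Np + 1 : ℕ) : ℝ) * ((1 - cos i) / 2) < (1 + cos i) / 2 := by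
    rw [div_lt_iff₀ (by positivity)] at hi
    push_cast at hi ⊢
    linarith
  intro τ₁ hτ₁ τ₂ hτ₂ h
  have hexp : Circle.exp (-(2 * π * τ₁)) = Circle.exp (-(2 * π * τ₂)) := by
    refine Circle.coe_injective <| injOn_smul_add_smul_pow (by linarith [cos_le_one i]) hcoef
      ?_ ?_ ?_
    · exact mem_closedBall_zero_iff.mpr (Circle.norm_coe _).le
    · exact mem_closedBall_zero_iff.mpr (Circle.norm_coe _).le
    · simp only [← planarProjection_progradeTrajectory_succ, h]
  have hmem (τ : ℝ) (hτ : τ ∈ Set.Ico (0 : ℝ) 1) : -(2 * π * τ) ∈ Set.Ioc (-2 * π) 0 := by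
    constructor <;> nlinarith [hτ.1, hτ.2, pi_pos]
  have hangle := Circle.exp_injOn_Ioc (by linarith) (hmem τ₁ hτ₁) (hmem τ₂ hτ₂) hexp
  exact mul_left_cancel₀ two_pi_pos.ne' (neg_inj.mp hangle)
end

section
/- Let N_d ≥ 2 be an integer, let N_p = N_d − 1, and let i be a real number with cos i < N_p/N_d. Then the relative trajectory p in a prograde rotating frame is not injective on [0,1); i.e., the relative trajectory self-intersects. -/
/-!
Two parameters placed symmetrically about the latitude maximum `τ₀ = 1/(4 N_p)`, namely
`τ₀ ∓ δ/2`, have the same height, and their horizontal positions are mirror images of each other in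
a line through the origin, `2 |D(δ)|` apart, where `D = collisionDefect`:
`D(δ) = cos (π N_d δ) sin (π N_p δ) - cos i · sin (π N_d δ) cos (π N_p δ)`.
Now `D(0) = 0` and `D'(0) = π (N_p - N_d cos i) > 0`, while at `δ = 1/(N_d + N_p)` the two angles
are supplementary and `D = (1 + cos i) sin b cos b ≤ 0` with `b = π N_d δ ∈ [π/2, π]`. The
intermediate value theorem gives a root `δ ∈ (0, 1/(N_d + N_p)]`, small enough for both
parameters to lie in `[0, 1)`.
-/

open Real

open Filter Topology Set

theorem eventually_pos_nhdsGT_of_deriv_pos {f : ℝ → ℝ} {x₀ : ℝ} (hf : 0 < deriv f x₀)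
    (hx₀ : f x₀ = 0) : ∀ᶠ x in 𝓝[>] x₀, 0 < f x := by
  filter_upwards [nhdsWithin_le_nhds (eventually_nhdsWithin_sign_eq_of_deriv_pos hf hx₀),
    self_mem_nhdsWithin] with x hsign (hx : x₀ < x)
  rw [sign_pos (sub_pos.mpr hx)] at hsign
  exact sign_eq_one_iff.mp hsign

noncomputable def collisionDefect (Nd Np : ℕ) (c δ : ℝ) : ℝ :=
  cos (π * Nd * δ) * sin (π * Np * δ) - c * (sin (π * Nd * δ) * cos (π * Np * δ))

section collisionDefect

variable {Nd Np : ℕ} {c : ℝ}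

theorem continuous_collisionDefect : Continuous (collisionDefect Nd Np c) := by
  unfold collisionDefect; fun_prop

theorem hasDerivAt_collisionDefect_zero :
    HasDerivAt (collisionDefect Nd Np c) (π * (Np - c * Nd)) 0 := by
  have hlin (N : ℕ) : HasDerivAt (fun δ : ℝ => π * N * δ) (π * N) 0 := by
    simpa using (hasDerivAt_id (0 : ℝ)).const_mul (π * N)
  exact (((hlin Nd).cos.mul (hlin Np).sin).sub
    (((hlin Nd).sin.mul (hlin Np).cos).const_mul c)).congr_deriv (by simp; ring)

theorem collisionDefect_one_div_add_nonpos (hc : -1 ≤ c) (hNpd : Np < Nd) :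
    collisionDefect Nd Np c (1 / (Nd + Np)) ≤ 0 := by
  have hsum : (0 : ℝ) < Nd + Np := by
    have : (0 : ℝ) < Nd := by exact_mod_cast (Nat.zero_le _).trans_lt hNpd
    positivity
  set b := π * Nd * (1 / (Nd + Np)) with hb
  have hsupp : π * Np * (1 / (Nd + Np)) = π - b := by
    rw [hb]; field_simp; ring
  have hb_le : b ≤ π := by
    rw [hb, mul_one_div, div_le_iff₀ hsum]; nlinarith [pi_pos]
  have hb_ge : π / 2 ≤ b := by
    rw [hb, mul_one_div, le_div_iff₀ hsum]
    nlinarith [pi_pos, (Nat.cast_lt (α := ℝ)).mpr hNpd]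
  have hsin : 0 ≤ sin b := sin_nonneg_of_nonneg_of_le_pi (by linarith [pi_pos]) hb_le
  have hcos : cos b ≤ 0 := cos_nonpos_of_pi_div_two_le_of_le hb_ge (by linarith)
  have : collisionDefect Nd Np c (1 / (Nd + Np)) = (1 + c) * (sin b * cos b) := by
    rw [collisionDefect, ← hb, hsupp, sin_pi_sub, cos_pi_sub]; ring
  rw [this]
  exact mul_nonpos_of_nonneg_of_nonpos (by linarith) (mul_nonpos_of_nonneg_of_nonpos hsin hcos)

theorem exists_collisionDefect_eq_zero (hc₁ : -1 ≤ c) (hc₂ : c < Np / Nd) (hNpd : Np < Nd) :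
    ∃ δ ∈ Ioc (0 : ℝ) (1 / (Nd + Np)), collisionDefect Nd Np c δ = 0 := by
  have hNd : (0 : ℝ) < Nd := by exact_mod_cast (Nat.zero_le _).trans_lt hNpd
  have hderiv : 0 < deriv (collisionDefect Nd Np c) 0 := by
    rw [hasDerivAt_collisionDefect_zero.deriv]
    exact mul_pos pi_pos (by linarith [(lt_div_iff₀ hNd).mp hc₂])
  have hend : (0 : ℝ) < 1 / (Nd + Np) := by positivity
  have hzero : collisionDefect Nd Np c 0 = 0 := by simp [collisionDefect]
  obtain ⟨x, hx_pos, hx⟩ :=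
    ((eventually_pos_nhdsGT_of_deriv_pos hderiv hzero).and (Ioo_mem_nhdsGT hend)).exists
  obtain ⟨δ, hδ, hδ_zero⟩ :=
    intermediate_value_Icc' hx.2.le continuous_collisionDefect.continuousOn
      ⟨collisionDefect_one_div_add_nonpos hc₁ hNpd, hx_pos.le⟩
  exact ⟨δ, ⟨hx.1.trans_le hδ.1, hδ.2⟩, hδ_zero⟩

end collisionDefect

theorem progradeTrajectory_sub_eq_add {Nd Np : ℕ} (hNp : Np ≠ 0) {i δ : ℝ}
    (hδ : collisionDefect Nd Np (cos i) δ = 0) :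
    progradeTrajectory Nd Np i (1 / (4 * Np) - δ / 2) =
      progradeTrajectory Nd Np i (1 / (4 * Np) + δ / 2) := by
  have hNp' : (Np : ℝ) ≠ 0 := by exact_mod_cast hNp
  rw [collisionDefect] at hδ
  have e1 : -(2 * π * Nd * (1 / (4 * Np) - δ / 2)) = π * Nd * δ - π * Nd / (2 * Np) := by
    field_simp; ring
  have e2 : 2 * π * Np * (1 / (4 * Np) - δ / 2) = π / 2 - π * Np * δ := by
    field_simp; ring
  have e3 : -(2 * π * Nd * (1 / (4 * Np) + δ / 2)) = -(π * Nd * δ) - π * Nd / (2 * Np) := by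
    field_simp; ring
  have e4 : 2 * π * Np * (1 / (4 * Np) + δ / 2) = π / 2 + π * Np * δ := by
    field_simp; ring
  simp only [progradeTrajectory, e1, e2, e3, e4, cos_sub, sin_sub, cos_add, sin_add,
    cos_pi_div_two, sin_pi_div_two, cos_neg, sin_neg, Prod.mk.injEq]
  refine ⟨?_, ?_, ?_⟩
  · linear_combination (2 * cos (π * Nd / (2 * Np))) * hδ
  · linear_combination (-2 * sin (π * Nd / (2 * Np))) * hδ
  · ring

theorem not_injOn_progradeTrajectory_of_collisionDefect_eq_zero {Nd Np : ℕ} (hNp : Np ≠ 0)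
    {i δ : ℝ} (hδ : δ ∈ Ioc (0 : ℝ) (1 / (2 * Np)))
    (hδ_zero : collisionDefect Nd Np (cos i) δ = 0) :
    ¬ InjOn (progradeTrajectory Nd Np i) (Ico 0 1) := by
  intro hinj
  obtain ⟨hδ_pos, hδ_le⟩ := hδ
  have hNp' : (1 : ℝ) ≤ Np := by exact_mod_cast Nat.one_le_iff_ne_zero.mpr hNp
  have hquarter : 1 / (4 * (Np : ℝ)) = 1 / (2 * Np) / 2 := by ring
  have hhalf : 1 / (2 * (Np : ℝ)) ≤ 1 / 2 := one_div_le_one_div_of_le two_pos (by linarith)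
  have hne := hinj (x₁ := 1 / (4 * Np) - δ / 2) (x₂ := 1 / (4 * Np) + δ / 2)
    (by constructor <;> linarith) (by constructor <;> linarith)
    (progradeTrajectory_sub_eq_add hNp hδ_zero)
  linarith

/-- Theorem 2, necessity, case `α > 0`, `N_p = N_d - 1`: if `cos i < N_p/N_d`,
the prograde relative trajectory self-intersects. -/
theorem prograde_not_injOn_of_cos_lt (Nd Np : ℕ) (hNd : 2 ≤ Nd) (hNp : Np = Nd - 1)
    (i : ℝ) (hi : Real.cos i < (Np : ℝ) / Nd) :
    ¬ Set.InjOn (progradeTrajectory Nd Np i) (Set.Ico 0 1) := by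
  have hNp_pos : 0 < Np := by omega
  have hNpd : Np < Nd := by omega
  obtain ⟨δ, hδ, hδ_zero⟩ := exists_collisionDefect_eq_zero (neg_one_le_cos i) hi hNpd
  have hbound : 1 / ((Nd : ℝ) + Np) ≤ 1 / (2 * Np) :=
    one_div_le_one_div_of_le (by norm_cast; omega) (by norm_cast; omega)
  exact not_injOn_progradeTrajectory_of_collisionDefect_eq_zero hNp_pos.ne'
    ⟨hδ.1, hδ.2.trans hbound⟩ hδ_zero
end

section
/- Let N_d ≥ 1 be an integer, let N_p = N_d + 1, let N = N_d + N_p, and let M = sSup { (sin(π N_p τ)·cos(π N_d τ))/(cos(π N_p τ)·sin(π N_d τ)) : τ ∈ [1/N, 3/(2N)] }. If i is a real number with cos i > M, then the relative trajectory p in a prograde rotating frame is injective on [0,1); i.e., the relative trajectory is non-self-intersecting. -/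
open Real

set_option maxHeartbeats 1000000 in
lemma interval_facts {Nd Np N : ℕ} (hNd : 1 ≤ Nd) (hNp : Np = Nd + 1) (hN : N = Nd + Np)
    {τ : ℝ} (hτ : τ ∈ Set.Icc (1/(N:ℝ)) (3/(2*(N:ℝ)))) :
    0 < Real.sin (π * Nd * τ) ∧ Real.cos (π * Np * τ) < 0 := by
  have hd1 : (1:ℝ) ≤ (Nd:ℝ) := by exact_mod_cast hNd
  have hdNp : (Np:ℝ) = (Nd:ℝ) + 1 := by rw [hNp]; push_cast; ring
  have hdN : (N:ℝ) = 2*(Nd:ℝ) + 1 := by rw [hN, hNp]; push_cast; ring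
  obtain ⟨hlo, hhi⟩ := hτ
  have hNpos : (0:ℝ) < N := by rw [hdN]; linarith
  have hτpos : 0 < τ := lt_of_lt_of_le (by positivity) hlo
  have hπ := pi_pos
  have h1 : (Nd:ℝ) * τ < 1 := by
    have h2 : (Nd:ℝ) * τ ≤ (Nd:ℝ) * (3/(2*N)) := by
      apply mul_le_mul_of_nonneg_left hhi (by linarith)
    have h3 : (Nd:ℝ) * (3/(2*N)) < 1 := by
      rw [mul_div_assoc', div_lt_one (by linarith)]
      linarith
    linarith
  have h4 : 1/2 < (Np:ℝ) * τ := by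
    have h5 : (Np:ℝ) * (1/N) ≤ (Np:ℝ) * τ := by
      apply mul_le_mul_of_nonneg_left hlo (by linarith)
    have h6 : (1:ℝ)/2 < (Np:ℝ) * (1/N) := by
      rw [mul_one_div, div_lt_div_iff₀ (by norm_num) (by linarith)]
      linarith
    linarith
  have h7 : (Np:ℝ) * τ ≤ 1 := by
    have h8 : (Np:ℝ) * τ ≤ (Np:ℝ) * (3/(2*N)) := by
      apply mul_le_mul_of_nonneg_left hhi (by linarith)
    have h9 : (Np:ℝ) * (3/(2*N)) ≤ 1 := by
      rw [mul_div_assoc', div_le_one (by linarith)]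
      linarith
    linarith
  constructor
  · apply sin_pos_of_pos_of_lt_pi
    · have : (0:ℝ) < (Nd:ℝ) * τ := by nlinarith
      nlinarith
    · nlinarith
  · apply cos_neg_of_pi_div_two_lt_of_lt
    · nlinarith
    · nlinarith

lemma bdd_image (Nd Np N : ℕ) (hNd : 1 ≤ Nd) (hNp : Np = Nd + 1) (hN : N = Nd + Np) :
    BddAbove ((fun τ : ℝ =>
        (Real.sin (π * Np * τ) * Real.cos (π * Nd * τ)) /
          (Real.cos (π * Np * τ) * Real.sin (π * Nd * τ))) ''
        Set.Icc (1 / (N : ℝ)) (3 / (2 * (N : ℝ)))) := by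
  apply IsCompact.bddAbove_image isCompact_Icc
  apply ContinuousOn.div
  · fun_prop
  · fun_prop
  · intro x hx
    obtain ⟨h1, h2⟩ := interval_facts hNd hNp hN hx
    exact ne_of_lt (mul_neg_of_neg_of_pos h2 h1)

lemma M_nonneg (Nd Np N : ℕ) (hNd : 1 ≤ Nd) (hNp : Np = Nd + 1) (hN : N = Nd + Np) :
    0 ≤ sSup ((fun τ : ℝ =>
        (Real.sin (π * Np * τ) * Real.cos (π * Nd * τ)) /
          (Real.cos (π * Np * τ) * Real.sin (π * Nd * τ))) ''
        Set.Icc (1 / (N : ℝ)) (3 / (2 * (N : ℝ)))) := by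
  have hd1 : (1:ℝ) ≤ (Nd:ℝ) := by exact_mod_cast hNd
  have hdN : (N:ℝ) = 2*(Nd:ℝ) + 1 := by rw [hN, hNp]; push_cast; ring
  have hNpos : (0:ℝ) < N := by rw [hdN]; linarith
  have hmem : (1:ℝ)/(2*Nd) ∈ Set.Icc (1 / (N : ℝ)) (3 / (2 * (N : ℝ))) := by
    constructor
    · rw [div_le_div_iff₀ hNpos (by linarith)]; linarith
    · rw [div_le_div_iff₀ (by linarith) (by linarith)]; linarith
  have hval : (fun τ : ℝ =>
        (Real.sin (π * Np * τ) * Real.cos (π * Nd * τ)) /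
          (Real.cos (π * Np * τ) * Real.sin (π * Nd * τ))) (1/(2*Nd)) = 0 := by
    have harg : π * (Nd:ℝ) * (1/(2*Nd)) = π/2 := by
      field_simp
    simp only [harg, cos_pi_div_two, mul_zero, zero_div]
  have := le_csSup (bdd_image Nd Np N hNd hNp hN) ⟨1/(2*Nd), hmem, hval⟩
  linarith


set_option maxHeartbeats 1000000 in
lemma aux_no_sol (Nd Np N : ℕ) (hNd : 1 ≤ Nd) (hNp : Np = Nd + 1) (hN : N = Nd + Np)
    (c d : ℝ) (hc1 : c ≤ 1)
    (hcM : sSup ((fun τ : ℝ =>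
        (Real.sin (π * Np * τ) * Real.cos (π * Nd * τ)) /
          (Real.cos (π * Np * τ) * Real.sin (π * Nd * τ))) ''
        Set.Icc (1 / (N : ℝ)) (3 / (2 * (N : ℝ)))) < c)
    (hd0 : 0 < d) (hd1 : d < 1)
    (heq : Real.sin (π*Np*d) * Real.cos (π*Nd*d) = c * (Real.cos (π*Np*d) * Real.sin (π*Nd*d))) :
    False := by
  have hπ := pi_pos
  have hd1R : (1:ℝ) ≤ (Nd:ℝ) := by exact_mod_cast hNd
  have hdNp : (Np:ℝ) = (Nd:ℝ) + 1 := by rw [hNp]; push_cast; ring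
  have hdN : (N:ℝ) = 2*(Nd:ℝ) + 1 := by rw [hN, hNp]; push_cast; ring
  have hNpos : (0:ℝ) < N := by rw [hdN]; linarith
  have hNne : (N:ℝ) ≠ 0 := ne_of_gt hNpos
  have hM0 := M_nonneg Nd Np N hNd hNp hN
  have hc0 : 0 < c := lt_of_le_of_lt hM0 hcM
  have hid1 : ∀ x:ℝ, 2*(Real.sin (π*Np*x) * Real.cos (π*Nd*x))
      = Real.sin (π*N*x) + Real.sin (π*x) := by
    intro x
    have h1 : π*(N:ℝ)*x = π*Np*x + π*Nd*x := by rw [hdN, hdNp]; ring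
    have h2 : π*x = π*(Np:ℝ)*x - π*(Nd:ℝ)*x := by rw [hdNp]; ring
    rw [h1, h2, sin_add, sin_sub]; ring
  have hid2 : ∀ x:ℝ, 2*(Real.cos (π*Np*x) * Real.sin (π*Nd*x))
      = Real.sin (π*N*x) - Real.sin (π*x) := by
    intro x
    have h1 : π*(N:ℝ)*x = π*Np*x + π*Nd*x := by rw [hdN, hdNp]; ring
    have h2 : π*x = π*(Np:ℝ)*x - π*(Nd:ℝ)*x := by rw [hdNp]; ring
    rw [h1, h2, sin_add, sin_sub]; ring
  have hsum : (1-c) * Real.sin (π*N*d) + (1+c) * Real.sin (π*d) = 0 := by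
    linear_combination 2*heq - hid1 d + c * hid2 d
  have hs : 0 < Real.sin (π*d) := by
    apply sin_pos_of_pos_of_lt_pi (by positivity)
    nlinarith
  rcases eq_or_lt_of_le hc1 with hceq | hclt
  · rw [hceq] at hsum; nlinarith
  · have hS : Real.sin (π*N*d) < 0 := by nlinarith
    obtain ⟨d1, hd1pos, hd1half, hsin1, hsinN1⟩ :
        ∃ d1 : ℝ, 0 < d1 ∧ d1 ≤ 1/2 ∧ Real.sin (π*d1) = Real.sin (π*d) ∧
          Real.sin (π*N*d1) = Real.sin (π*N*d) := by
      have hsinNpi : Real.sin (π*(N:ℝ)) = 0 := by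
        rw [mul_comm]; exact sin_nat_mul_pi N
      have hcosNpi : Real.cos (π*(N:ℝ)) = -1 := by
        rw [show π*(N:ℝ) = (Nd:ℝ)*(2*π) + π by rw [hdN]; ring, cos_add_pi, cos_nat_mul_two_pi]
      rcases le_or_gt d (1/2) with h | h
      · exact ⟨d, hd0, h, rfl, rfl⟩
      · refine ⟨1 - d, by linarith, by linarith, ?_, ?_⟩
        · rw [show π*(1-d) = π - π*d by ring, sin_pi_sub]
        · rw [show π*(N:ℝ)*(1-d) = π*N - π*N*d by ring, sin_sub, hsinNpi, hcosNpi]; ring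
    obtain ⟨d2, hd2lo, hd2hi, hd2led1, hsinN2⟩ :
        ∃ d2 : ℝ, 1/(N:ℝ) < d2 ∧ d2 < 2/(N:ℝ) ∧ d2 ≤ d1 ∧
          Real.sin (π*N*d2) = Real.sin (π*N*d1) := by
      set j := ⌊(N:ℝ)*d1/2⌋₊ with hjdef
      have hj1 : (j:ℝ) ≤ (N:ℝ)*d1/2 := Nat.floor_le (by positivity)
      have hj2 : (N:ℝ)*d1/2 < (j:ℝ) + 1 := Nat.lt_floor_add_one _
      have hNd2 : (N:ℝ)*(d1 - 2*(j:ℝ)/(N:ℝ)) = N*d1 - 2*j := by field_simp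
      have hsineq : Real.sin (π*N*(d1 - 2*(j:ℝ)/(N:ℝ))) = Real.sin (π*N*d1) := by
        have harg : π*(N:ℝ)*(d1 - 2*(j:ℝ)/(N:ℝ)) = π*N*d1 - ((j:ℤ):ℝ)*(2*π) := by
          push_cast
          linear_combination π * hNd2
        rw [harg, Real.sin_sub_int_mul_two_pi]
      have hy0 : 0 ≤ (N:ℝ)*(d1 - 2*(j:ℝ)/(N:ℝ)) := by rw [hNd2]; linarith
      have hy2 : (N:ℝ)*(d1 - 2*(j:ℝ)/(N:ℝ)) < 2 := by rw [hNd2]; linarith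
      have hy1 : 1 < (N:ℝ)*(d1 - 2*(j:ℝ)/(N:ℝ)) := by
        by_contra hcon
        push_neg at hcon
        have hnn : 0 ≤ Real.sin (π*N*(d1 - 2*(j:ℝ)/(N:ℝ))) := by
          apply sin_nonneg_of_nonneg_of_le_pi
          · nlinarith
          · nlinarith
        rw [hsineq, hsinN1] at hnn
        linarith
      refine ⟨d1 - 2*(j:ℝ)/(N:ℝ), ?_, ?_, ?_, hsineq⟩
      · rw [div_lt_iff₀ hNpos]; nlinarith
      · rw [lt_div_iff₀ hNpos]; nlinarith
      · have h0 : 0 ≤ 2*(j:ℝ)/(N:ℝ) := by positivity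
        linarith
    have hd2pos : 0 < d2 := lt_trans (by positivity) hd2lo
    have hd2half : d2 ≤ 1/2 := le_trans hd2led1 hd1half
    obtain ⟨ds, hdsIcc, hdsled2, hsinNs⟩ :
        ∃ ds : ℝ, ds ∈ Set.Icc (1/(N:ℝ)) (3/(2*(N:ℝ))) ∧ ds ≤ d2 ∧
          Real.sin (π*N*ds) = Real.sin (π*N*d2) := by
      have h32 : 3/(N:ℝ) - 3/(2*(N:ℝ)) = 3/(2*(N:ℝ)) := by ring
      have h12 : 1/(N:ℝ) + 2/(N:ℝ) = 3/(N:ℝ) := by ring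
      rcases le_or_gt d2 (3/(2*(N:ℝ))) with h | h
      · exact ⟨d2, ⟨hd2lo.le, h⟩, le_refl _, rfl⟩
      · refine ⟨3/(N:ℝ) - d2, ⟨by linarith, by linarith⟩, by linarith, ?_⟩
        have harg : π*(N:ℝ)*(3/(N:ℝ) - d2) = 3*π - π*N*d2 := by
          field_simp
        have hs3 : Real.sin (3*π) = 0 := by
          rw [show (3:ℝ)*π = π + 2*π by ring, sin_add_two_pi, sin_pi]
        have hc3 : Real.cos (3*π) = -1 := by
          rw [show (3:ℝ)*π = π + 2*π by ring, cos_add_two_pi, cos_pi]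
        rw [harg, sin_sub, hs3, hc3]; ring
    have hmono : ∀ a b : ℝ, 0 ≤ a → a ≤ b → b ≤ 1/2 → Real.sin (π*a) ≤ Real.sin (π*b) := by
      intro a b ha hab hb
      rcases eq_or_lt_of_le hab with rfl | hab'
      · exact le_refl _
      · apply le_of_lt
        apply strictMonoOn_sin ⟨by nlinarith, by nlinarith⟩ ⟨by nlinarith, by nlinarith⟩
        nlinarith
    have hdspos : 0 < ds := lt_of_lt_of_le (by positivity) hdsIcc.1
    have hds_le : Real.sin (π*ds) ≤ Real.sin (π*d) := by
      calc Real.sin (π*ds) ≤ Real.sin (π*d2) := hmono ds d2 hdspos.le hdsled2 hd2half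
        _ ≤ Real.sin (π*d1) := hmono d2 d1 hd2pos.le hd2led1 hd1half
        _ = Real.sin (π*d) := hsin1
    have hdshalf : ds ≤ 1/2 := le_trans hdsled2 hd2half
    have hsspos : 0 < Real.sin (π*ds) :=
      sin_pos_of_pos_of_lt_pi (by positivity) (by nlinarith)
    have hSs : Real.sin (π*N*ds) = Real.sin (π*N*d) := by rw [hsinNs, hsinN2, hsinN1]
    have e1 := hid1 ds
    have e2 := hid2 ds
    rw [hSs] at e1 e2
    have hden : Real.sin (π*N*d) - Real.sin (π*ds) < 0 := by linarith
    have hnum' : Real.sin (π*Np*ds) * Real.cos (π*Nd*ds)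
        = (Real.sin (π*N*d) + Real.sin (π*ds))/2 := by linarith
    have hden' : Real.cos (π*Np*ds) * Real.sin (π*Nd*ds)
        = (Real.sin (π*N*d) - Real.sin (π*ds))/2 := by linarith
    have hfval : (fun τ : ℝ =>
        (Real.sin (π * Np * τ) * Real.cos (π * Nd * τ)) /
          (Real.cos (π * Np * τ) * Real.sin (π * Nd * τ))) ds
        = (Real.sin (π*N*d) + Real.sin (π*ds))/(Real.sin (π*N*d) - Real.sin (π*ds)) := by
      simp only
      rw [hnum', hden', div_div_div_comm]
      norm_num
    have hub := le_csSup (bdd_image Nd Np N hNd hNp hN) ⟨ds, hdsIcc, hfval⟩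
    have hlb : c ≤ (Real.sin (π*N*d) + Real.sin (π*ds))/(Real.sin (π*N*d) - Real.sin (π*ds)) := by
      rw [le_div_iff_of_neg hden]
      nlinarith [mul_nonneg (by linarith : (0:ℝ) ≤ 1+c)
        (by linarith : 0 ≤ Real.sin (π*d) - Real.sin (π*ds))]
    linarith


set_option maxHeartbeats 1000000 in
/-- Theorem 2, sufficiency, case `α > 0`, `N_p = N_d + 1`: if
`cos i > max_{τ ∈ [1/N, 3/(2N)]} tan(π N_p τ)/tan(π N_d τ)` (where `N = N_d + N_p`),
the prograde relative trajectory is non-self-intersecting. -/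
theorem prograde_injOn_of_cos_gt_max (Nd Np N : ℕ) (hNd : 1 ≤ Nd) (hNp : Np = Nd + 1)
    (hN : N = Nd + Np)
    (M : ℝ)
    (hM : M = sSup ((fun τ : ℝ =>
        (Real.sin (π * Np * τ) * Real.cos (π * Nd * τ)) /
          (Real.cos (π * Np * τ) * Real.sin (π * Nd * τ))) ''
        Set.Icc (1 / (N : ℝ)) (3 / (2 * (N : ℝ)))))
    (i : ℝ) (hi : M < Real.cos i) :
    Set.InjOn (progradeTrajectory Nd Np i) (Set.Ico 0 1) := by
  have hπ := pi_pos
  have hdNp : (Np:ℝ) = (Nd:ℝ) + 1 := by rw [hNp]; push_cast; ring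
  have hM0 : 0 ≤ M := hM ▸ M_nonneg Nd Np N hNd hNp hN
  have hc0 : 0 < Real.cos i := lt_of_le_of_lt hM0 hi
  have hc1 : Real.cos i ≤ 1 := cos_le_one i
  intro τ1 h1 τ2 h2 heq
  by_contra hne
  simp only [progradeTrajectory, Prod.mk.injEq] at heq
  obtain ⟨E1, E2, E3⟩ := heq
  have hd_ne : τ1 - τ2 ≠ 0 := sub_ne_zero.2 hne
  obtain ⟨h10, h11⟩ := h1
  obtain ⟨h20, h21⟩ := h2
  -- helper to finish from integrality
  have hint : ∀ n : ℤ, (n:ℝ) = τ1 - τ2 → False := by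
    intro n hn
    have hb1 : (n:ℝ) < 1 := by rw [hn]; linarith
    have hb2 : (-1:ℝ) < n := by rw [hn]; linarith
    have hn0 : n = 0 := by
      have hb1' : n < 1 := by exact_mod_cast hb1
      have hb2' : -1 < n := by exact_mod_cast hb2
      omega
    rw [hn0] at hn
    simp at hn
    exact hne (by linarith)
  by_cases hceq1 : Real.cos i = 1
  · -- degenerate equatorial case
    rw [hceq1] at E1 E2
    have a1 : 2*π*τ1 = -(2 * π * (Nd:ℝ) * τ1) + 2 * π * (Np:ℝ) * τ1 := by rw [hdNp]; ring
    have a2 : 2*π*τ2 = -(2 * π * (Nd:ℝ) * τ2) + 2 * π * (Np:ℝ) * τ2 := by rw [hdNp]; ring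
    have hx : Real.cos (2*π*τ1) = Real.cos (2*π*τ2) := by
      rw [a1, a2, Real.cos_add, Real.cos_add]
      linear_combination E1
    have hy : Real.sin (2*π*τ1) = Real.sin (2*π*τ2) := by
      rw [a1, a2, Real.sin_add, Real.sin_add]
      linear_combination E2
    have hone : Real.cos ((2*π*τ1) - (2*π*τ2)) = 1 := by
      rw [Real.cos_sub, hx, hy]
      linear_combination sin_sq_add_cos_sq (2*π*τ2)
    obtain ⟨n, hn⟩ := (Real.cos_eq_one_iff _).1 hone
    apply hint n
    have h2π : (0:ℝ) < 2*π := by linarith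
    have : (2*π) * (n:ℝ) = (2*π) * (τ1 - τ2) := by linarith [hn]
    exact mul_left_cancel₀ (ne_of_gt h2π) this
  · -- main case : cos i < 1
    have hclt1 : Real.cos i < 1 := lt_of_le_of_ne hc1 hceq1
    have hσ : Real.sin i ≠ 0 := by
      intro h0
      apply hceq1
      have hp := sin_sq_add_cos_sq i
      rw [h0] at hp
      have h2 : (Real.cos i - 1) * (Real.cos i + 1) = 0 := by linear_combination hp
      rcases mul_eq_zero.1 h2 with h3 | h3
      · linarith
      · linarith
    have hS12 : Real.sin (2 * π * (Np:ℝ) * τ1) = Real.sin (2 * π * (Np:ℝ) * τ2) :=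
      mul_right_cancel₀ hσ E3
    rw [← hS12] at E1 E2
    have hpy2 := sin_sq_add_cos_sq (-(2*π*(Nd:ℝ)*τ2))
    have F1 : Real.cos ((-(2*π*(Nd:ℝ)*τ1)) - (-(2*π*(Nd:ℝ)*τ2))) * Real.cos (2*π*(Np:ℝ)*τ1)
        - Real.sin ((-(2*π*(Nd:ℝ)*τ1)) - (-(2*π*(Nd:ℝ)*τ2)))
            * (Real.sin (2*π*(Np:ℝ)*τ1) * Real.cos i)
        = Real.cos (2*π*(Np:ℝ)*τ2) := by
      rw [Real.cos_sub, Real.sin_sub]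
      linear_combination (Real.cos (-(2*π*(Nd:ℝ)*τ2))) * E1
        + (Real.sin (-(2*π*(Nd:ℝ)*τ2))) * E2 + (Real.cos (2*π*(Np:ℝ)*τ2)) * hpy2
    have F2 : Real.sin ((-(2*π*(Nd:ℝ)*τ1)) - (-(2*π*(Nd:ℝ)*τ2))) * Real.cos (2*π*(Np:ℝ)*τ1)
        + Real.cos ((-(2*π*(Nd:ℝ)*τ1)) - (-(2*π*(Nd:ℝ)*τ2)))
            * (Real.sin (2*π*(Np:ℝ)*τ1) * Real.cos i)
        = Real.sin (2*π*(Np:ℝ)*τ1) * Real.cos i := by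
      rw [Real.cos_sub, Real.sin_sub]
      linear_combination (-(Real.sin (-(2*π*(Nd:ℝ)*τ2)))) * E1
        + (Real.cos (-(2*π*(Nd:ℝ)*τ2))) * E2
        + (Real.sin (2*π*(Np:ℝ)*τ1) * Real.cos i) * hpy2
    set Δ := (-(2*π*(Nd:ℝ)*τ1)) - (-(2*π*(Nd:ℝ)*τ2)) with hΔdef
    set C1 := Real.cos (2*π*(Np:ℝ)*τ1) with hC1def
    set S1 := Real.sin (2*π*(Np:ℝ)*τ1) with hS1def
    set C2 := Real.cos (2*π*(Np:ℝ)*τ2) with hC2def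
    have hpyΔ := sin_sq_add_cos_sq Δ
    have hpyu1 := sin_sq_add_cos_sq (2*π*(Np:ℝ)*τ1)
    rw [← hS1def, ← hC1def] at hpyu1
    have hC2sq : C2 * C2 = C1 * C1 := by
      linear_combination (-(C2 + (Real.cos Δ*C1 - Real.sin Δ*(S1*Real.cos i)))) * F1
        + (-((S1*Real.cos i) + (Real.sin Δ*C1 + Real.cos Δ*(S1*Real.cos i)))) * F2
        + ((C1^2) + (S1*Real.cos i)^2) * hpyΔ
    have caseA : C2 = C1 → False := by
      intro hA
      rw [hA] at F1
      have hR : 0 < C1^2 + (S1*Real.cos i)^2 := by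
        rcases eq_or_ne C1 0 with h0 | h0
        · have hs1 : S1^2 = 1 := by rw [h0] at hpyu1; simpa using hpyu1
          have hs2 : (S1*Real.cos i)^2 = Real.cos i^2 := by rw [mul_pow, hs1, one_mul]
          have hs3 : 0 < Real.cos i^2 := pow_pos hc0 2
          rw [h0, hs2]
          simpa using hs3
        · have ha : 0 < C1^2 := by positivity
          have hb : 0 ≤ (S1*Real.cos i)^2 := sq_nonneg _
          linarith
      have h5 : Real.cos Δ * (C1^2 + (S1*Real.cos i)^2)
          = 1 * (C1^2 + (S1*Real.cos i)^2) := by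
        linear_combination C1 * F1 + (S1*Real.cos i) * F2
      have hcosΔ : Real.cos Δ = 1 := mul_right_cancel₀ (ne_of_gt hR) h5
      have hcosU : Real.cos ((2*π*(Np:ℝ)*τ1) - (2*π*(Np:ℝ)*τ2)) = 1 := by
        rw [Real.cos_sub, ← hS12, ← hC2def, ← hC1def, ← hS1def, hA]
        linear_combination hpyu1
      obtain ⟨n, hn⟩ := (Real.cos_eq_one_iff _).1 hcosΔ
      obtain ⟨m, hm⟩ := (Real.cos_eq_one_iff _).1 hcosU
      rw [hΔdef] at hn
      apply hint (m + n)
      have h2π : (0:ℝ) < 2*π := by linarith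
      have h6 : (2*π) * ((m:ℝ) + (n:ℝ)) = (2*π) * (τ1 - τ2) := by
        linear_combination hm + hn + (2*π*(τ1-τ2)) * hdNp
      push_cast
      exact mul_left_cancel₀ (ne_of_gt h2π) h6
    rcases (mul_self_eq_mul_self_iff).1 hC2sq with hA | hB
    · exact caseA hA
    · by_cases hC10 : C1 = 0
      · exact caseA (by rw [hB, hC10, neg_zero])
      · -- the genuine crossing case
        have hΔ2 : Δ = -(2*(π*(Nd:ℝ)*(τ1 - τ2))) := by rw [hΔdef]; ring
        have hpyδ := sin_sq_add_cos_sq (π*(Nd:ℝ)*(τ1 - τ2))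
        have hpyv := sin_sq_add_cos_sq (π*(Np:ℝ)*(τ1 - τ2))
        rw [hB] at F1
        rw [hΔ2, Real.cos_neg, Real.sin_neg, Real.cos_two_mul, Real.sin_two_mul] at F1 F2
        -- F1 : (2*cosδ^2-1)*C1 - -(2*sinδ*cosδ)*(S1*ci) = -C1
        -- F2 : -(2*sinδ*cosδ)*C1 + (2*cosδ^2-1)*(S1*ci) = S1*ci
        have hstar1' : Real.sin (π*(Nd:ℝ)*(τ1 - τ2)) *
            (Real.cos (π*(Nd:ℝ)*(τ1 - τ2)) * C1
              + Real.sin (π*(Nd:ℝ)*(τ1 - τ2)) * (S1*Real.cos i)) = 0 := by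
          linear_combination (-1/2) * F2 + (S1*Real.cos i) * hpyδ
        have hsδ : Real.sin (π*(Nd:ℝ)*(τ1 - τ2)) ≠ 0 := by
          intro h0
          apply hC10
          rw [h0] at F1 hpyδ
          linear_combination (1/2) * F1 - C1 * hpyδ
        have hstar1 : Real.cos (π*(Nd:ℝ)*(τ1 - τ2)) * C1
            + Real.sin (π*(Nd:ℝ)*(τ1 - τ2)) * (S1*Real.cos i) = 0 :=
          (mul_eq_zero.1 hstar1').resolve_left hsδ
        -- u side
        have e1 : Real.cos (2*π*(Np:ℝ)*τ1 - 2*(π*(Np:ℝ)*(τ1 - τ2))) = -C1 := by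
          rw [show 2*π*(Np:ℝ)*τ1 - 2*(π*(Np:ℝ)*(τ1 - τ2)) = 2*π*(Np:ℝ)*τ2 by ring]
          rw [← hC2def]; exact hB
        have e2 : Real.sin (2*π*(Np:ℝ)*τ1 - 2*(π*(Np:ℝ)*(τ1 - τ2))) = S1 := by
          rw [show 2*π*(Np:ℝ)*τ1 - 2*(π*(Np:ℝ)*(τ1 - τ2)) = 2*π*(Np:ℝ)*τ2 by ring]
          rw [← hS12]
        rw [Real.cos_sub, Real.cos_two_mul, Real.sin_two_mul, ← hC1def, ← hS1def] at e1
        rw [Real.sin_sub, Real.cos_two_mul, Real.sin_two_mul, ← hC1def, ← hS1def] at e2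
        have hstar2' : Real.cos (π*(Np:ℝ)*(τ1 - τ2)) *
            (C1 * Real.cos (π*(Np:ℝ)*(τ1 - τ2)) + S1 * Real.sin (π*(Np:ℝ)*(τ1 - τ2))) = 0 := by
          linear_combination (1/2) * e1
        have hstar2'' : Real.sin (π*(Np:ℝ)*(τ1 - τ2)) *
            (C1 * Real.cos (π*(Np:ℝ)*(τ1 - τ2)) + S1 * Real.sin (π*(Np:ℝ)*(τ1 - τ2))) = 0 := by
          linear_combination (-1/2) * e2 + S1 * hpyv
        have hstar2 : C1 * Real.cos (π*(Np:ℝ)*(τ1 - τ2)) + S1 * Real.sin (π*(Np:ℝ)*(τ1 - τ2)) = 0 := by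
          by_contra hns
          rcases mul_eq_zero.1 hstar2' with h0 | h0
          · rcases mul_eq_zero.1 hstar2'' with h0' | h0'
            · rw [h0, h0'] at hpyv; norm_num at hpyv
            · exact hns h0'
          · exact hns h0
        have hT : C1^2 * (Real.sin (π*(Np:ℝ)*(τ1 - τ2)) * Real.cos (π*(Nd:ℝ)*(τ1 - τ2))
            - Real.cos i * (Real.cos (π*(Np:ℝ)*(τ1 - τ2)) * Real.sin (π*(Nd:ℝ)*(τ1 - τ2)))) = 0 := by
          linear_combination (Real.sin (π*(Np:ℝ)*(τ1 - τ2)) * C1) * hstar1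
            - (Real.cos i * Real.sin (π*(Nd:ℝ)*(τ1 - τ2)) * C1) * hstar2
        have hT0 : Real.sin (π*(Np:ℝ)*(τ1 - τ2)) * Real.cos (π*(Nd:ℝ)*(τ1 - τ2))
            - Real.cos i * (Real.cos (π*(Np:ℝ)*(τ1 - τ2)) * Real.sin (π*(Nd:ℝ)*(τ1 - τ2))) = 0 := by
          rcases mul_eq_zero.1 hT with h0 | h0
          · exact absurd h0 (pow_ne_zero 2 hC10)
          · exact h0
        rcases lt_or_gt_of_ne hd_ne with hdneg | hdpos
        · apply aux_no_sol Nd Np N hNd hNp hN (Real.cos i) (-(τ1 - τ2)) hc1 (hM ▸ hi)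
            (by linarith) (by linarith)
          rw [show π*(Np:ℝ)*(-(τ1 - τ2)) = -(π*(Np:ℝ)*(τ1 - τ2)) by ring,
            show π*(Nd:ℝ)*(-(τ1 - τ2)) = -(π*(Nd:ℝ)*(τ1 - τ2)) by ring,
            Real.sin_neg, Real.cos_neg, Real.sin_neg, Real.cos_neg]
          linear_combination -hT0
        · apply aux_no_sol Nd Np N hNd hNp hN (Real.cos i) (τ1 - τ2) hc1 (hM ▸ hi)
            (by linarith) (by linarith)
          linear_combination hT0
end

section
/- Let N_d ≥ 1 be an integer, let N_p = N_d + 1, let N = N_d + N_p, and let M = sSup { (sin(π N_p τ)·cos(π N_d τ))/(cos(π N_p τ)·sin(π N_d τ)) : τ ∈ [1/N, 3/(2N)] }. If i is a real number with cos i < M, then the relative trajectory p in a prograde rotating frame is not injective on [0,1); i.e., the relative trajectory self-intersects. -/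
open Real

noncomputable def auxF (d : ℝ) : ℝ → ℝ := fun τ =>
  Real.sin (π * (d+1) * τ) * Real.cos (π * d * τ) /
    (Real.cos (π * (d+1) * τ) * Real.sin (π * d * τ))

lemma aux_den (d : ℝ) (hd : 1 ≤ d) (τ : ℝ)
    (hτ : τ ∈ Set.Icc (1/(2*d+1)) (3/(2*(2*d+1)))) :
    Real.cos (π * (d+1) * τ) * Real.sin (π * d * τ) < 0 := by
  obtain ⟨h1, h2⟩ := hτ
  have hN : (0:ℝ) < 2*d+1 := by linarith
  have hlb : 1 ≤ τ * (2*d+1) := (div_le_iff₀ hN).mp h1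
  have hub : τ * (2*(2*d+1)) ≤ 3 := by
    rw [le_div_iff₀ (by linarith : (0:ℝ) < 2*(2*d+1))] at h2; exact h2
  have hτpos : 0 < τ := by nlinarith
  have hπ := Real.pi_pos
  have hτhalf : τ ≤ 1/2 := by nlinarith [mul_nonneg hτpos.le (by linarith : (0:ℝ) ≤ 4*d-4)]
  have hsin : 0 < Real.sin (π * d * τ) := by
    apply Real.sin_pos_of_pos_of_lt_pi
    · have hd0 : (0:ℝ) < d := by linarith
      positivity
    · have hdτ : d*τ < 1 := by nlinarith
      nlinarith
  have hcos : Real.cos (π * (d+1) * τ) < 0 := by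
    apply Real.cos_neg_of_pi_div_two_lt_of_lt
    · have : 1 < 2*((d+1)*τ) := by nlinarith
      nlinarith
    · have : (d+1)*τ ≤ 1 := by nlinarith
      nlinarith
  exact mul_neg_of_neg_of_pos hcos hsin

lemma aux_cont (d : ℝ) (hd : 1 ≤ d) :
    ContinuousOn (auxF d) (Set.Icc (1/(2*d+1)) (3/(2*(2*d+1)))) := by
  apply ContinuousOn.div
  · fun_prop
  · fun_prop
  · intro τ hτ; exact (aux_den d hd τ hτ).ne

lemma aux_left (d : ℝ) (hd : 1 ≤ d) : auxF d (1/(2*d+1)) = -1 := by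
  have hN : (0:ℝ) < 2*d+1 := by linarith
  have hπ := Real.pi_pos
  have hv : π * (d+1) * (1/(2*d+1)) = π - π * d * (1/(2*d+1)) := by
    field_simp; ring
  have hw1 : 0 < π * d * (1/(2*d+1)) := by positivity
  have hw2 : π * d * (1/(2*d+1)) < π/2 := by
    have h0 : d / (2*d+1) < 1/2 := by rw [div_lt_div_iff₀ hN (by norm_num)]; linarith
    calc π * d * (1/(2*d+1)) = π * (d/(2*d+1)) := by ring
    _ < π * (1/2) := by nlinarith
    _ = π/2 := by ring
  have hsin : Real.sin (π * d * (1/(2*d+1))) ≠ 0 :=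
    (Real.sin_pos_of_pos_of_lt_pi hw1 (by linarith)).ne'
  have hcos : Real.cos (π * d * (1/(2*d+1))) ≠ 0 :=
    (Real.cos_pos_of_mem_Ioo ⟨by linarith, hw2⟩).ne'
  simp only [auxF, hv, Real.sin_pi_sub, Real.cos_pi_sub]
  have hden : -Real.cos (π * d * (1/(2*d+1))) * Real.sin (π * d * (1/(2*d+1))) ≠ 0 := by
    simp only [neg_mul, ne_eq, neg_eq_zero, mul_eq_zero, not_or]
    exact ⟨hcos, hsin⟩
  rw [div_eq_iff hden]
  ring

/-- Theorem 2, necessity, case `α > 0`, `N_p = N_d + 1`: if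
`cos i < max_{τ ∈ [1/N, 3/(2N)]} tan(π N_p τ)/tan(π N_d τ)` (where `N = N_d + N_p`),
the prograde relative trajectory self-intersects. -/
theorem prograde_not_injOn_of_cos_lt_max (Nd Np N : ℕ) (hNd : 1 ≤ Nd) (hNp : Np = Nd + 1)
    (hN : N = Nd + Np)
    (M : ℝ)
    (hM : M = sSup ((fun τ : ℝ =>
        (Real.sin (π * Np * τ) * Real.cos (π * Nd * τ)) /
          (Real.cos (π * Np * τ) * Real.sin (π * Nd * τ))) ''
        Set.Icc (1 / (N : ℝ)) (3 / (2 * (N : ℝ)))))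
    (i : ℝ) (hi : Real.cos i < M) :
    ¬ Set.InjOn (progradeTrajectory Nd Np i) (Set.Ico 0 1) := by
  subst hNp; subst hN
  have hd : (1:ℝ) ≤ (Nd:ℝ) := by exact_mod_cast hNd
  set d : ℝ := (Nd:ℝ) with hdd
  have hcast1 : ((Nd + 1 : ℕ) : ℝ) = d + 1 := by push_cast; ring
  have hcast2 : ((Nd + (Nd + 1) : ℕ) : ℝ) = 2*d + 1 := by push_cast; ring
  simp only [hcast1, hcast2] at hM
  have hM' : M = sSup (auxF d '' Set.Icc (1/(2*d+1)) (3/(2*(2*d+1)))) := by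
    rw [hM]; rfl
  have hN0 : (0:ℝ) < 2*d+1 := by linarith
  have hπ := Real.pi_pos
  have hLR : 1/(2*d+1) ≤ 3/(2*(2*d+1)) := by
    rw [div_le_div_iff₀ hN0 (by linarith)]; linarith
  have hbdd : BddAbove (auxF d '' Set.Icc (1/(2*d+1)) (3/(2*(2*d+1)))) :=
    (isCompact_Icc.image_of_continuousOn (aux_cont d hd)).bddAbove
  have hne : (auxF d '' Set.Icc (1/(2*d+1)) (3/(2*(2*d+1)))).Nonempty :=
    (Set.nonempty_Icc.mpr hLR).image _
  rw [hM'] at hi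
  obtain ⟨y, ⟨τ₁, hτ₁, rfl⟩, hcy⟩ := (lt_csSup_iff hbdd hne).mp hi
  -- IVT on [L, τ₁]
  have hsub : Set.Icc (1/(2*d+1)) τ₁ ⊆ Set.Icc (1/(2*d+1)) (3/(2*(2*d+1))) :=
    Set.Icc_subset_Icc le_rfl hτ₁.2
  have hmem : Real.cos i ∈ Set.Icc (auxF d (1/(2*d+1))) (auxF d τ₁) := by
    rw [aux_left d hd]; exact ⟨Real.neg_one_le_cos i, hcy.le⟩
  obtain ⟨τ₀, hτ₀, hfτ₀⟩ := intermediate_value_Icc hτ₁.1 ((aux_cont d hd).mono hsub) hmem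
  have hτ₀R : τ₀ ∈ Set.Icc (1/(2*d+1)) (3/(2*(2*d+1))) := ⟨hτ₀.1, hτ₀.2.trans hτ₁.2⟩
  have hdenne := (aux_den d hd τ₀ hτ₀R).ne
  simp only [auxF] at hfτ₀
  rw [div_eq_iff hdenne] at hfτ₀
  -- hfτ₀ : sin v * cos w = cos i * (cos v * sin w)
  -- witnesses
  have hlb : 1 ≤ τ₀ * (2*d+1) := (div_le_iff₀ hN0).mp hτ₀R.1
  have hub : τ₀ * (2*(2*d+1)) ≤ 3 := by
    have := hτ₀R.2; rw [le_div_iff₀ (by linarith : (0:ℝ) < 2*(2*d+1))] at this; exact this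
  have hτ₀pos : 0 < τ₀ := by nlinarith
  have hτ₀half : τ₀ ≤ 1/2 := by
    nlinarith [mul_nonneg hτ₀pos.le (by linarith : (0:ℝ) ≤ 4*d-4)]
  have hdp : (0:ℝ) < d + 1 := by linarith
  set a : ℝ := 3/(4*(d+1)) - τ₀/2 with hA
  set b : ℝ := 3/(4*(d+1)) + τ₀/2 with hB
  have ha0 : (0:ℝ) ≤ a := by
    rw [hA, sub_nonneg, div_le_div_iff₀ (by norm_num : (0:ℝ) < 2) (by linarith)]
    nlinarith
  have hblt : b < 1 := by
    have h38 : 3/(4*(d+1)) ≤ 3/8 := by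
      rw [div_le_div_iff₀ (by linarith) (by norm_num : (0:ℝ) < 8)]; linarith
    rw [hB]; linarith
  have haltb : a < b := by rw [hA, hB]; linarith
  -- the trajectory equality
  set v : ℝ := π * (d+1) * τ₀ with hv
  set w : ℝ := π * d * τ₀ with hw
  set θ : ℝ := -(3*π*d/(2*(d+1))) with hθ
  have e1 : -(2 * π * d * a) = θ + w := by rw [hA, hθ, hw]; field_simp; ring
  have e2 : 2 * π * (d+1) * a = 3*π/2 - v := by rw [hA, hv]; field_simp; ring
  have e3 : -(2 * π * d * b) = θ - w := by rw [hB, hθ, hw]; field_simp; ring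
  have e4 : 2 * π * (d+1) * b = 3*π/2 + v := by rw [hB, hv]; field_simp; ring
  have c32 : Real.cos (3*π/2) = 0 := by
    rw [show (3*π/2:ℝ) = π + π/2 by ring, Real.cos_add, Real.cos_pi, Real.sin_pi,
      Real.cos_pi_div_two, Real.sin_pi_div_two]; ring
  have s32 : Real.sin (3*π/2) = -1 := by
    rw [show (3*π/2:ℝ) = π + π/2 by ring, Real.sin_add, Real.cos_pi, Real.sin_pi,
      Real.cos_pi_div_two, Real.sin_pi_div_two]; ring
  have heq : progradeTrajectory Nd (Nd+1) i a = progradeTrajectory Nd (Nd+1) i b := by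
    simp only [progradeTrajectory, hcast1, ← hdd]
    rw [e1, e2, e3, e4]
    simp only [Real.cos_add, Real.sin_add, Real.cos_sub, Real.sin_sub, c32, s32,
      Prod.mk.injEq]
    refine ⟨?_, ?_, ?_⟩
    · linear_combination (-(2*Real.cos θ)) * hfτ₀
    · linear_combination (-(2*Real.sin θ)) * hfτ₀
    · ring
  intro hinj
  have := hinj ⟨ha0, lt_trans haltb hblt⟩ ⟨le_trans ha0 haltb.le, hblt⟩ heq
  linarith
end

section
/- Let N_d and N_p be coprime positive integers with |N_p − N_d| ≥ 2. Then for every real inclination i, the relative trajectory p is not injective on [0,1), both in the prograde rotating frame and in the retrograde rotating frame. In other words, N_p = N_d − 1 or N_p = N_d + 1 is a necessary condition for a non-self-intersecting relative trajectory. -/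
/-!
Let `n = -N_d` in the prograde and `n = N_d` in the retrograde frame, and let `τ₀ = 1 / (4 N_p)`,
the time of highest latitude (`u = π / 2`). The positions at the times `τ₀ ± x / (2π)` have the
same height, and their horizontal parts agree as soon as
`F x = sin (N_p x) cos (n x) + cos i · cos (N_p x) sin (n x)` vanishes. Since
`F x = (1 + cos i) / 2 · sin ((N_p + n) x) + (1 - cos i) / 2 · sin ((N_p - n) x)` and
`|N_p ± n| ≠ 1`, `F` is orthogonal to `sin` on `(0, π)`, where `sin` is positive; so `F` has a
zero in `(0, π)`, which yields two distinct times in one period with the same position.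
-/

open Real

/-- The relative trajectory in a retrograde rotating frame: ascending node longitude
`Θ = 2π N_d τ`, argument of latitude `u = 2π N_p τ`, inclination `i`, unit radius. -/
noncomputable def retrogradeTrajectory (Nd Np : ℕ) (i : ℝ) (τ : ℝ) : ℝ × ℝ × ℝ :=
  let Θ : ℝ := 2 * π * Nd * τ
  let u : ℝ := 2 * π * Np * τ
  (Real.cos Θ * Real.cos u - Real.sin Θ * Real.sin u * Real.cos i,
   Real.sin Θ * Real.cos u + Real.cos Θ * Real.sin u * Real.cos i,
   Real.sin u * Real.sin i)

open Set Function

theorem not_injOn_Ico_of_periodic {α β : Type*} [AddCommGroup α] [LinearOrder α]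
    [IsOrderedAddMonoid α] [Archimedean α] {f : α → β} {p : α} (hp : 0 < p)
    (hf : Periodic f p) (a : α) {x y : α} (hxy : f x = f y) (h₀ : 0 < y - x) (h₁ : y - x < p) :
    ¬ InjOn f (Ico a (a + p)) := by
  intro hinj
  have hmap (z : α) : f (toIcoMod hp a z) = f z := hf.sub_zsmul_eq _
  obtain ⟨n, hn⟩ := (toIcoMod_eq_toIcoMod hp).1 <|
    hinj (toIcoMod_mem_Ico hp a x) (toIcoMod_mem_Ico hp a y) (by rw [hmap, hmap, hxy])
  rw [hn] at h₀ h₁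
  have hn₀ : 0 < n := (zsmul_lt_zsmul_iff_left hp).1 (by rwa [zero_zsmul])
  have hn₁ : n < 1 := (zsmul_lt_zsmul_iff_left hp).1 (by rwa [one_zsmul])
  omega

theorem exists_mem_Ioo_eq_zero_of_intervalIntegral_eq_zero {f : ℝ → ℝ} {a b : ℝ} (hab : a < b)
    (hf : ContinuousOn f (Icc a b)) (h : ∫ x in a..b, f x = 0) : ∃ c ∈ Ioo a b, f c = 0 := by
  by_contra! hne
  have hmid : (a + b) / 2 ∈ Ioo a b := ⟨by linarith, by linarith⟩
  wlog hpos : 0 < f ((a + b) / 2) generalizing f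
  · refine this hf.neg (by simp [intervalIntegral.integral_neg, h])
      (fun c hc => by simpa using hne c hc) ?_
    simpa using (hne _ hmid).lt_of_le (not_lt.1 hpos)
  have hIoo : ContinuousOn f (Ioo a b) := hf.mono Ioo_subset_Icc_self
  refine (intervalIntegral.intervalIntegral_pos_of_pos_on (hf.intervalIntegrable_of_Icc hab.le)
    (fun c hc => ?_) hab).ne' h
  by_contra! hc'
  obtain ⟨d, hd, hfd⟩ := isPreconnected_Ioo.intermediate_value hc hmid hIoo ⟨hc', hpos.le⟩
  exact hne d hd hfd

theorem integral_cos_int_mul_eq_zero {k : ℤ} (hk : k ≠ 0) : ∫ x in (0)..π, cos (k * x) = 0 := by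
  rw [intervalIntegral.integral_comp_mul_left cos (Int.cast_ne_zero.2 hk), integral_cos]
  simp [sin_int_mul_pi]

theorem integral_sin_int_mul_mul_sin_eq_zero {k : ℤ} (hk : |k| ≠ 1) :
    ∫ x in (0)..π, sin (k * x) * sin x = 0 := by
  have hprod (x : ℝ) : sin (k * x) * sin x =
      (cos (((k - 1 : ℤ) : ℝ) * x) - cos (((k + 1 : ℤ) : ℝ) * x)) / 2 := by
    push_cast
    rw [sub_mul, add_mul, one_mul, cos_sub, cos_add]
    ring
  simp only [hprod]
  rw [intervalIntegral.integral_div, intervalIntegral.integral_sub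
    (Continuous.intervalIntegrable (by fun_prop) _ _)
    (Continuous.intervalIntegrable (by fun_prop) _ _), integral_cos_int_mul_eq_zero (by grind),
    integral_cos_int_mul_eq_zero (by grind)]
  simp

theorem exists_mem_Ioo_sin_mul_cos_add_mul_cos_mul_sin_eq_zero (c : ℝ) {m n : ℤ}
    (hsub : |m - n| ≠ 1) (hadd : |m + n| ≠ 1) :
    ∃ x ∈ Ioo 0 π, sin (m * x) * cos (n * x) + c * (cos (m * x) * sin (n * x)) = 0 := by
  have hsum (x : ℝ) : (sin (m * x) * cos (n * x) + c * (cos (m * x) * sin (n * x))) * sin x =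
      (1 + c) / 2 * (sin (((m + n : ℤ) : ℝ) * x) * sin x) +
        (1 - c) / 2 * (sin (((m - n : ℤ) : ℝ) * x) * sin x) := by
    push_cast
    rw [add_mul (m : ℝ), sub_mul (m : ℝ), sin_add, sin_sub]
    ring
  have hint : ∫ x in (0)..π,
      (sin (m * x) * cos (n * x) + c * (cos (m * x) * sin (n * x))) * sin x = 0 := by
    simp only [hsum]
    rw [intervalIntegral.integral_add (Continuous.intervalIntegrable (by fun_prop) _ _)
      (Continuous.intervalIntegrable (by fun_prop) _ _), intervalIntegral.integral_const_mul,
      intervalIntegral.integral_const_mul, integral_sin_int_mul_mul_sin_eq_zero hadd,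
      integral_sin_int_mul_mul_sin_eq_zero hsub]
    simp
  obtain ⟨x, hx, hzero⟩ :=
    exists_mem_Ioo_eq_zero_of_intervalIntegral_eq_zero pi_pos (by fun_prop) hint
  exact ⟨x, hx, (mul_eq_zero.1 hzero).resolve_right (sin_pos_of_pos_of_lt_pi hx.1 hx.2).ne'⟩

-- the point with argument of latitude `u` on the orbit, turned by `Θ` about the z-axis
noncomputable def orbitPoint (i Θ u : ℝ) : ℝ × ℝ × ℝ :=
  (cos Θ * cos u - sin Θ * sin u * cos i, sin Θ * cos u + cos Θ * sin u * cos i, sin u * sin i)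

theorem orbitPoint_add_eq_sub {i ψ φ : ℝ} (Θ : ℝ)
    (h : sin φ * cos ψ + cos i * (cos φ * sin ψ) = 0) :
    orbitPoint i (Θ + ψ) (π / 2 + φ) = orbitPoint i (Θ - ψ) (π / 2 - φ) := by
  simp only [orbitPoint, cos_add, sin_add, cos_sub, sin_sub, cos_pi_div_two, sin_pi_div_two,
    Prod.mk.injEq]
  refine ⟨?_, ?_, by ring⟩
  · linear_combination (-2 * cos Θ) * h
  · linear_combination (-2 * sin Θ) * h

theorem periodic_orbitPoint (i : ℝ) (m n : ℤ) :
    Periodic (fun τ => orbitPoint i (2 * π * n * τ) (2 * π * m * τ)) 1 := by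
  intro τ
  have hΘ : 2 * π * n * (τ + 1) = 2 * π * n * τ + n * (2 * π) := by ring
  have hu : 2 * π * m * (τ + 1) = 2 * π * m * τ + m * (2 * π) := by ring
  simp only [hΘ, hu, orbitPoint, cos_add_int_mul_two_pi, sin_add_int_mul_two_pi]

theorem not_injOn_orbitPoint (i : ℝ) {m n : ℤ} (hm : m ≠ 0) (hsub : |m - n| ≠ 1)
    (hadd : |m + n| ≠ 1) :
    ¬ InjOn (fun τ => orbitPoint i (2 * π * n * τ) (2 * π * m * τ)) (Ico 0 1) := by
  obtain ⟨x, ⟨hx₀, hxπ⟩, hx⟩ :=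
    exists_mem_Ioo_sin_mul_cos_add_mul_cos_mul_sin_eq_zero (cos i) hsub hadd
  -- reflection about the time `τ₀ = 1 / (4 m)` of highest latitude, where `u = π / 2`
  have hsymm (τ₀ : ℝ) (hτ₀ : τ₀ = 1 / (4 * m)) :
      orbitPoint i (2 * π * n * (τ₀ - x / (2 * π))) (2 * π * m * (τ₀ - x / (2 * π))) =
        orbitPoint i (2 * π * n * (τ₀ + x / (2 * π))) (2 * π * m * (τ₀ + x / (2 * π))) := by
    convert (orbitPoint_add_eq_sub (2 * π * n * τ₀) hx).symm using 2 <;> subst hτ₀ <;>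
      field_simp <;> ring
  have hgap (τ₀ : ℝ) : τ₀ + x / (2 * π) - (τ₀ - x / (2 * π)) = x / π := by field_simp; ring
  simpa using not_injOn_Ico_of_periodic one_pos (periodic_orbitPoint i m n) 0 (hsymm _ rfl)
    (by rw [hgap]; positivity) (by rwa [hgap, div_lt_one pi_pos])

theorem progradeTrajectory_eq_orbitPoint (Nd Np : ℕ) (i : ℝ) :
    progradeTrajectory Nd Np i =
      fun τ => orbitPoint i (2 * π * ((-Nd : ℤ) : ℝ) * τ) (2 * π * ((Np : ℤ) : ℝ) * τ) := by
  funext τ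
  simp only [progradeTrajectory, orbitPoint]
  push_cast
  ring_nf

theorem retrogradeTrajectory_eq_orbitPoint (Nd Np : ℕ) (i : ℝ) :
    retrogradeTrajectory Nd Np i =
      fun τ => orbitPoint i (2 * π * ((Nd : ℤ) : ℝ) * τ) (2 * π * ((Np : ℤ) : ℝ) * τ) := by
  funext τ
  simp only [retrogradeTrajectory, orbitPoint, Int.cast_natCast]

theorem not_injOn_of_two_le_abs_sub_general (Nd Np : ℕ) (hNp : 0 < Np)
    (hK : 2 ≤ |(Np : ℤ) - (Nd : ℤ)|) :
    ∀ i : ℝ,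
      ¬ Set.InjOn (progradeTrajectory Nd Np i) (Set.Ico 0 1) ∧
      ¬ Set.InjOn (retrogradeTrajectory Nd Np i) (Set.Ico 0 1) := by
  intro i
  have hm : (Np : ℤ) ≠ 0 := by omega
  have hsub : |(Np : ℤ) - Nd| ≠ 1 := (one_lt_two.trans_le hK).ne'
  have hadd : |(Np : ℤ) + Nd| ≠ 1 := by
    rw [le_abs] at hK
    rw [abs_of_nonneg (by omega)]
    omega
  rw [progradeTrajectory_eq_orbitPoint, retrogradeTrajectory_eq_orbitPoint]
  exact ⟨not_injOn_orbitPoint i hm (by rwa [sub_neg_eq_add]) (by rwa [← sub_eq_add_neg]),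
    not_injOn_orbitPoint i hm hsub hadd⟩

/-- Necessity claim inside Theorem 2: if `|N_p - N_d| ≥ 2`, the relative trajectory
self-intersects for every inclination, in both prograde and retrograde frames; hence
`N_p = N_d ± 1` is necessary for a non-self-intersecting relative trajectory. -/
theorem not_injOn_of_two_le_abs_sub (Nd Np : ℕ) (hNd : 0 < Nd) (hNp : 0 < Np)
    (hcop : Nat.Coprime Nd Np) (hK : 2 ≤ |(Np : ℤ) - (Nd : ℤ)|) :
    ∀ i : ℝ,
      ¬ Set.InjOn (progradeTrajectory Nd Np i) (Set.Ico 0 1) ∧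
      ¬ Set.InjOn (retrogradeTrajectory Nd Np i) (Set.Ico 0 1) :=
  not_injOn_of_two_le_abs_sub_general Nd Np hNp hK
end

section
/- Let N_d and N_p be coprime positive integers and let i be a real number with cos i = 0 (a polar orbit). Then the relative trajectory p is not injective on [0,1), both in the prograde rotating frame and in the retrograde rotating frame: polar relative trajectories always self-intersect. -/
open Real

/-- Claim inside Theorem 2: polar relative trajectories (`cos i = 0`) always
self-intersect, in both prograde and retrograde rotating frames. -/
theorem polar_not_injOn (Nd Np : ℕ) (hNd : 0 < Nd) (hNp : 0 < Np)
    (hcop : Nat.Coprime Nd Np) (i : ℝ) (hi : Real.cos i = 0) :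
    ¬ Set.InjOn (progradeTrajectory Nd Np i) (Set.Ico 0 1) ∧
    ¬ Set.InjOn (retrogradeTrajectory Nd Np i) (Set.Ico 0 1) := by
  have hNdZ : (0:ℤ) < 2 * Nd := by positivity
  set x : ℤ := ((Nd:ℤ) - Np) % (2 * Nd) with hxdef
  obtain ⟨q, hq⟩ : ∃ q : ℤ, x = (Nd - Np) - 2 * Nd * q :=
    ⟨((Nd:ℤ) - Np) / (2 * Nd), by rw [hxdef, Int.emod_def]⟩
  have hx0 : 0 ≤ x := Int.emod_nonneg _ (by positivity)
  have hx1 : x < 2 * Nd := Int.emod_lt_of_pos _ hNdZ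
  have hD : (0:ℝ) < 4 * Nd * Np := by positivity
  have hNdR : (Nd:ℝ) ≠ 0 := Nat.cast_ne_zero.2 hNd.ne'
  have hNpR : (Np:ℝ) ≠ 0 := Nat.cast_ne_zero.2 hNp.ne'
  set τ₁ : ℝ := (x : ℝ) / (4 * Nd * Np) with hτ₁def
  set τ₂ : ℝ := ((x : ℝ) + 2 * Np) / (4 * Nd * Np) with hτ₂def
  have hx0' : (0:ℝ) ≤ (x:ℝ) := by exact_mod_cast hx0
  have hx1' : (x:ℝ) < 2 * Nd := by exact_mod_cast hx1
  have hbound : (x:ℝ) + 2 * Np < 4 * Nd * Np := by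
    have h1 : (1:ℝ) ≤ Nd := by exact_mod_cast hNd
    have h2 : (1:ℝ) ≤ Np := by exact_mod_cast hNp
    nlinarith
  have hlt : τ₁ < τ₂ := by
    rw [hτ₁def, hτ₂def, div_lt_div_iff_of_pos_right hD]
    have : (0:ℝ) < Np := by exact_mod_cast hNp
    linarith
  have hm1 : τ₁ ∈ Set.Ico (0:ℝ) 1 := by
    constructor
    · exact div_nonneg hx0' hD.le
    · rw [hτ₁def, div_lt_one hD]; linarith
  have hm2 : τ₂ ∈ Set.Ico (0:ℝ) 1 := by
    constructor
    · apply div_nonneg (by linarith [show (0:ℝ) ≤ (Np:ℝ) by positivity]) hD.le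
    · rw [hτ₂def, div_lt_one hD]; exact hbound
  have hxr : (x:ℝ) = Nd - Np - 2 * Nd * q := by exact_mod_cast hq
  have h1 : 2 * π * Nd * τ₂ = 2 * π * Nd * τ₁ + π := by
    rw [hτ₁def, hτ₂def]; field_simp; ring
  have h2 : 2 * π * Np * τ₂ = (π - 2 * π * Np * τ₁) + ((-q : ℤ) : ℝ) * (2 * π) := by
    rw [hτ₁def, hτ₂def, hxr]; push_cast; field_simp; ring
  constructor
  · intro h
    exact hlt.ne (h hm1 hm2 (by
      simp only [progradeTrajectory, h1, h2, Real.cos_add_int_mul_two_pi,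
        Real.sin_add_int_mul_two_pi, Real.cos_pi_sub, Real.sin_pi_sub,
        Real.cos_neg, Real.sin_neg, Real.cos_add_pi, Real.sin_add_pi, hi]
      ring_nf))
  · intro h
    exact hlt.ne (h hm1 hm2 (by
      simp only [retrogradeTrajectory, h1, h2, Real.cos_add_int_mul_two_pi,
        Real.sin_add_int_mul_two_pi, Real.cos_pi_sub, Real.sin_pi_sub,
        Real.cos_add_pi, Real.sin_add_pi, hi]
      ring_nf))
end

section
/- Let N_d and N_p be coprime positive integers with |N_p − N_d| ≥ 2. Then for every real number r there exists τ ∈ (0,1) such that sin(π (N_p − N_d) τ) = r·sin(π (N_p + N_d) τ). -/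
open Real

lemma key_exists (K S : ℕ) (hK : 2 ≤ K) (hKS : K < S) (r : ℝ) :
    ∃ τ ∈ Set.Ioo (0 : ℝ) 1,
      Real.sin (π * (K : ℝ) * τ) = r * Real.sin (π * (S : ℝ) * τ) := by
  have hS0 : (0:ℝ) < S := by exact_mod_cast (by omega : 0 < S)
  have hKpos : (0:ℝ) < K := by exact_mod_cast (by omega : 0 < K)
  by_cases hdvd : K ∣ S
  · -- take τ = 1/K; both sines vanish
    refine ⟨1 / (K : ℝ), ⟨by positivity, ?_⟩, ?_⟩
    · rw [div_lt_one hKpos]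
      exact_mod_cast (by omega : 1 < K)
    · obtain ⟨c, hc⟩ := hdvd
      have h1 : π * (K : ℝ) * (1 / K) = π := by field_simp
      have h2 : π * (S : ℝ) * (1 / K) = c * π := by
        rw [hc]; push_cast; field_simp
      rw [h1, h2, Real.sin_pi, Real.sin_nat_mul_pi, mul_zero]
  · -- IVT between 1/S and j0/S with j0 = S/K + 1
    set j0 : ℕ := S / K + 1 with hj0
    have hmod : S % K ≠ 0 := fun h => hdvd (Nat.dvd_of_mod_eq_zero h)
    have hmlt : S % K < K := Nat.mod_lt _ (by omega)
    have hj0S : j0 < S := by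
      have h2 : S / K ≤ S / 2 := Nat.div_le_div_left hK (by norm_num)
      omega
    have hSltKj0 : S < K * j0 :=
      calc S = K * (S / K) + S % K := (Nat.div_add_mod S K).symm
        _ < K * (S / K) + K := by omega
        _ = K * j0 := by rw [hj0, Nat.mul_succ]
    have hKj0lt : K * j0 < 2 * S := by
      have h1 : K * (S / K) ≤ S := Nat.mul_div_le S K
      have h2 : K * j0 = K * (S / K) + K := by rw [hj0, Nat.mul_succ]
      omega
    set f : ℝ → ℝ := fun τ => Real.sin (π * K * τ) - r * Real.sin (π * S * τ) with hf
    have hcont : Continuous f := by fun_prop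
    have ha : f (1 / S) > 0 := by
      have h2 : π * (S : ℝ) * (1 / S) = π := by field_simp
      have h1 : f (1 / S) = Real.sin (π * K / S) := by
        show Real.sin (π * K * (1 / S)) - r * Real.sin (π * S * (1 / S)) = _
        rw [h2, Real.sin_pi, mul_zero, sub_zero, mul_one_div]
      rw [h1]
      apply Real.sin_pos_of_pos_of_lt_pi
      · positivity
      · rw [div_lt_iff₀ hS0]
        have : (K:ℝ) < S := by exact_mod_cast hKS
        nlinarith [Real.pi_pos]
    have hb : f ((j0 : ℝ) / S) < 0 := by
      have h2 : π * (S : ℝ) * ((j0:ℝ) / S) = j0 * π := by field_simp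
      have h1 : f ((j0:ℝ) / S) = Real.sin (π * ((K * j0 : ℕ):ℝ) / S) := by
        show Real.sin (π * K * ((j0:ℝ) / S)) - r * Real.sin (π * S * ((j0:ℝ) / S)) = _
        rw [h2, Real.sin_nat_mul_pi, mul_zero, sub_zero]
        push_cast; ring_nf
      rw [h1]
      set x : ℝ := ((K * j0 : ℕ):ℝ) / S with hx
      have hx1 : (1:ℝ) < x := by
        rw [hx, lt_div_iff₀ hS0, one_mul]; exact_mod_cast hSltKj0
      have hx2 : x < 2 := by
        rw [hx, div_lt_iff₀ hS0]
        have : ((K * j0 : ℕ):ℝ) < ((2 * S : ℕ):ℝ) := by exact_mod_cast hKj0lt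
        push_cast at this ⊢; linarith
      have hrw : π * ((K * j0 : ℕ):ℝ) / S = π * (x - 1) + π := by
        rw [hx]; ring
      rw [hrw, Real.sin_add_pi, neg_lt_zero]
      apply Real.sin_pos_of_pos_of_lt_pi
      · have := Real.pi_pos; nlinarith
      · have := Real.pi_pos; nlinarith
    have hab : (1:ℝ)/S ≤ (j0:ℝ)/S := by
      gcongr
      exact_mod_cast Nat.le_add_left 1 (S / K)
    have hivt := intermediate_value_Icc' hab hcont.continuousOn
    have h0 : (0:ℝ) ∈ Set.Icc (f ((j0:ℝ)/S)) (f (1/S)) := ⟨le_of_lt hb, le_of_lt ha⟩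
    obtain ⟨τ, hτ, hfτ⟩ := hivt h0
    refine ⟨τ, ⟨?_, ?_⟩, ?_⟩
    · have : (0:ℝ) < 1 / S := by positivity
      linarith [hτ.1]
    · have hjS : (j0:ℝ)/S < 1 := by
        rw [div_lt_one hS0]; exact_mod_cast hj0S
      linarith [hτ.2]
    · have : Real.sin (π * K * τ) - r * Real.sin (π * S * τ) = 0 := hfτ
      linarith

/-- Existence claim inside Theorem 2: if `|N_p - N_d| ≥ 2` then for every coefficient `r`
the self-intersection equation `sin(π(N_p - N_d)τ) = r·sin(π(N_p + N_d)τ)` has a solution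
`τ ∈ (0,1)`. -/
theorem exists_solution_of_two_le_abs_sub (Nd Np : ℕ) (hNd : 0 < Nd) (hNp : 0 < Np)
    (hcop : Nat.Coprime Nd Np) (hK : 2 ≤ |(Np : ℤ) - (Nd : ℤ)|) :
    ∀ r : ℝ, ∃ τ ∈ Set.Ioo (0 : ℝ) 1,
      Real.sin (π * ((Np : ℝ) - (Nd : ℝ)) * τ) =
        r * Real.sin (π * ((Np : ℝ) + (Nd : ℝ)) * τ) := by
  intro r
  have habs : 2 ≤ (Np : ℤ) - Nd ∨ (Np : ℤ) - Nd ≤ -2 := by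
    rcases le_or_gt 0 ((Np : ℤ) - Nd) with h | h
    · left; rwa [abs_of_nonneg h] at hK
    · right; rw [abs_of_neg h] at hK; omega
  have hSsum : ((Np : ℝ) + (Nd : ℝ)) = ((Np + Nd : ℕ) : ℝ) := by push_cast; ring
  rcases habs with h | h
  · have h1 : Nd + 2 ≤ Np := by omega
    obtain ⟨τ, hτ, heq⟩ := key_exists (Np - Nd) (Np + Nd) (by omega) (by omega) r
    refine ⟨τ, hτ, ?_⟩
    have hcast : ((Np - Nd : ℕ) : ℝ) = (Np : ℝ) - Nd := by
      have hle : Nd ≤ Np := by omega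
      push_cast [hle]; ring
    rw [hcast, ← hSsum] at heq
    exact heq
  · have h1 : Np + 2 ≤ Nd := by omega
    obtain ⟨τ, hτ, heq⟩ := key_exists (Nd - Np) (Np + Nd) (by omega) (by omega) (-r)
    refine ⟨τ, hτ, ?_⟩
    have hcast : ((Nd - Np : ℕ) : ℝ) = (Nd : ℝ) - Np := by
      have hle : Np ≤ Nd := by omega
      push_cast [hle]; ring
    rw [hcast, ← hSsum] at heq
    have harg : π * ((Np:ℝ) - Nd) * τ = -(π * ((Nd:ℝ) - Np) * τ) := by ring
    rw [harg, Real.sin_neg, heq]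
    ring
end

section
/- Let n ≥ 2 be an integer and let r be a real number with n·r > 1. Then there exists τ ∈ (0, 1/n) such that sin(πτ) = r·sin(nπτ). -/
/-!
The function `f τ = sin (π τ) - r sin (n π τ)` vanishes at `0` with derivative
`π (1 - n r) < 0` there, so it is negative just to the right of `0`, while
`f (1 / n) = sin (π / n) > 0` because `n ≥ 2`. The intermediate value theorem gives a zero
in between.
-/

open Real Filter Set Topology

lemma HasDerivAt.eventually_nhdsGT_lt_of_neg {f : ℝ → ℝ} {f' a : ℝ} (hf : HasDerivAt f f' a)
    (hf' : f' < 0) : ∀ᶠ x in 𝓝[>] a, f x < f a := by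
  have hslope := (hasDerivWithinAt_iff_tendsto_slope' self_notMem_Ioi).mp hf.hasDerivWithinAt
  filter_upwards [hslope.eventually (eventually_lt_nhds hf'), self_mem_nhdsWithin]
    with x hx (hax : a < x)
  exact (slope_neg_iff_of_le hax.le).mp hx

lemma exists_mem_Ioo_eq_of_hasDerivAt_neg {f : ℝ → ℝ} {f' a b : ℝ} (hab : a < b)
    (hf : ContinuousOn f (Icc a b)) (hfa : HasDerivAt f f' a) (hf' : f' < 0) (hfab : f a < f b) :
    ∃ c ∈ Ioo a b, f c = f a := by
  obtain ⟨x, hfx, hxb, hax⟩ := ((hfa.eventually_nhdsGT_lt_of_neg hf').and <|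
    ((eventually_lt_nhds hab).filter_mono nhdsWithin_le_nhds).and self_mem_nhdsWithin).exists
  obtain ⟨c, hc, hfc⟩ :=
    intermediate_value_Ioo hxb.le (hf.mono (Icc_subset_Icc_left hax.le)) ⟨hfx, hfab⟩
  exact ⟨c, ⟨hax.trans hc.1, hc.2⟩, hfc⟩

lemma hasDerivAt_sin_const_mul (c x : ℝ) :
    HasDerivAt (fun t => sin (c * t)) (cos (c * x) * c) x := by
  simpa using ((hasDerivAt_id x).const_mul c).sin

/-- Existence claim of Theorem 2 (case `N_p = N_d - 1`): if `n ≥ 2` and `n·r > 1`,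
the equation `sin(πτ) = r·sin(nπτ)` has a solution `τ ∈ (0, 1/n)`. -/
theorem exists_sin_eq_mul_sin_of_one_lt_mul (n : ℕ) (hn : 2 ≤ n) (r : ℝ) (hr : 1 < n * r) :
    ∃ τ ∈ Set.Ioo (0 : ℝ) (1 / (n : ℝ)),
      Real.sin (π * τ) = r * Real.sin (n * π * τ) := by
  set f : ℝ → ℝ := fun τ => sin (π * τ) - r * sin (n * π * τ)
  have hn₀ : (0 : ℝ) < n := by positivity
  have hderiv : HasDerivAt f (π * (1 - n * r)) 0 := by
    refine ((hasDerivAt_sin_const_mul π 0).sub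
      ((hasDerivAt_sin_const_mul (n * π) 0).const_mul r)).congr_deriv ?_
    simp only [mul_zero, cos_zero]
    ring
  have hend : f 0 < f (1 / n) := by
    have hsin_pos : 0 < sin (π * (1 / n)) := by
      rw [mul_one_div]
      exact sin_pos_of_pos_of_lt_pi (by positivity)
        (div_lt_self pi_pos (by exact_mod_cast (by omega : 1 < n)))
    have hsin_eq : sin (n * π * (1 / n)) = 0 := by
      rw [mul_one_div, mul_div_cancel_left₀ _ hn₀.ne', sin_pi]
    simpa only [f, hsin_eq, mul_zero, sin_zero, sub_zero] using hsin_pos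
  obtain ⟨τ, hτ, hfτ⟩ := exists_mem_Ioo_eq_of_hasDerivAt_neg (by positivity) (by fun_prop) hderiv
    (mul_neg_of_pos_of_neg pi_pos (by linarith)) hend
  refine ⟨τ, hτ, ?_⟩
  simpa [f, sub_eq_zero] using hfτ
end

section
/- Let N ≥ 3 be an odd integer and let r < 0 be a real number. If there exists τ ∈ (0,1) with sin(πτ) = r·sin(Nπτ), then there exists such a τ in the interval [1/N, 3/(2N)]. -/
open Real

/-- Localization claim of Theorem 2 (case `N_p = N_d + 1`): for odd `N ≥ 3` and `r < 0`,
if `sin(πτ) = r·sin(Nπτ)` has a solution `τ ∈ (0,1)`, it has one in `[1/N, 3/(2N)]`. -/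
theorem solution_localization (N : ℕ) (hN : 3 ≤ N) (hodd : Odd N) (r : ℝ) (hr : r < 0)
    (h : ∃ τ ∈ Set.Ioo (0 : ℝ) 1, Real.sin (π * τ) = r * Real.sin (N * π * τ)) :
    ∃ τ ∈ Set.Icc (1 / (N : ℝ)) (3 / (2 * (N : ℝ))),
      Real.sin (π * τ) = r * Real.sin (N * π * τ) := by
  have hN3 : (3 : ℝ) ≤ (N : ℝ) := by exact_mod_cast hN
  have hNpos : (0 : ℝ) < (N : ℝ) := by linarith
  have hpi := Real.pi_pos
  have hb2 : (3 : ℝ) / (2 * N) ≤ 1 / 2 := by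
    rw [div_le_div_iff₀ (by linarith) (by norm_num)]; linarith
  by_cases hsmall : Real.sin (π * (3 / (2 * (N : ℝ)))) + r ≤ 0
  · -- IVT case
    set f : ℝ → ℝ := fun t => Real.sin (π * t) - r * Real.sin (N * π * t) with hf
    have hab : (1 : ℝ) / N ≤ 3 / (2 * N) := by
      rw [div_le_div_iff₀ hNpos (by linarith)]; linarith
    have hcont : ContinuousOn f (Set.Icc (1 / (N : ℝ)) (3 / (2 * N))) := by
      apply Continuous.continuousOn; fun_prop
    have hfa : f (1 / (N : ℝ)) = Real.sin (π / N) := by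
      have h1 : (N : ℝ) * π * (1 / N) = π := by field_simp
      have h2 : π * (1 / (N : ℝ)) = π / N := by ring
      simp only [hf]
      rw [h1, h2, Real.sin_pi, mul_zero, sub_zero]
    have hfb : f (3 / (2 * (N : ℝ))) = Real.sin (π * (3 / (2 * N))) + r := by
      have h1 : (N : ℝ) * π * (3 / (2 * N)) = π + π / 2 := by field_simp; ring
      simp only [hf]
      rw [h1, Real.sin_add, Real.sin_pi, Real.cos_pi, Real.sin_pi_div_two,
        Real.cos_pi_div_two]
      ring
    have hfapos : 0 ≤ f (1 / (N : ℝ)) := by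
      rw [hfa]
      apply le_of_lt
      apply Real.sin_pos_of_pos_of_lt_pi (by positivity)
      rw [div_lt_iff₀ hNpos]; nlinarith
    have hmem : (0 : ℝ) ∈ Set.Icc (f (3 / (2 * (N : ℝ)))) (f (1 / (N : ℝ))) := by
      constructor
      · rw [hfb]; exact hsmall
      · exact hfapos
    have := intermediate_value_Icc' hab hcont hmem
    obtain ⟨τ, hτ, hτ0⟩ := this
    exact ⟨τ, hτ, by simpa [hf, sub_eq_zero] using hτ0⟩
  · -- the existing solution (or its reflection) lies in the interval
    push_neg at hsmall
    obtain ⟨τ₀, ⟨hτ₀0, hτ₀1⟩, heq₀⟩ := h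
    obtain ⟨k, hk⟩ := hodd
    -- symmetrize: set τ = min τ₀ (1 - τ₀), the equation still holds and τ ∈ (0, 1/2]
    have hsym : Real.sin (π * (1 - τ₀)) = r * Real.sin (N * π * (1 - τ₀)) := by
      have h1 : π * (1 - τ₀) = π - π * τ₀ := by ring
      have h2 : (N : ℝ) * π * (1 - τ₀) = (π - N * π * τ₀) + (k : ℕ) * (2 * π) := by
        have : (N : ℝ) = 2 * k + 1 := by exact_mod_cast hk
        rw [this]; ring
      rw [h1, Real.sin_pi_sub, h2, Real.sin_add_nat_mul_two_pi, Real.sin_pi_sub, heq₀]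
    set τ := min τ₀ (1 - τ₀) with hτdef
    have hτpos : 0 < τ := lt_min hτ₀0 (by linarith)
    have hτhalf : τ ≤ 1 / 2 := by
      rcases le_total τ₀ (1 - τ₀) with hc | hc
      · have : τ = τ₀ := min_eq_left hc
        rw [this]; linarith
      · have : τ = 1 - τ₀ := min_eq_right hc
        rw [this]; linarith
    have heq : Real.sin (π * τ) = r * Real.sin (N * π * τ) := by
      rcases min_choice τ₀ (1 - τ₀) with hc | hc
      · rw [hτdef, hc]; exact heq₀
      · rw [hτdef, hc]; exact hsym
    have hsinpos : 0 < Real.sin (π * τ) := by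
      apply Real.sin_pos_of_pos_of_lt_pi (by positivity)
      nlinarith
    have hsinNneg : Real.sin ((N : ℝ) * π * τ) < 0 := by
      by_contra hcon
      push_neg at hcon
      nlinarith
    -- lower bound: τ ≥ 1/N
    have hlow : 1 / (N : ℝ) ≤ τ := by
      by_contra hcon
      push_neg at hcon
      have : Real.sin ((N : ℝ) * π * τ) ≥ 0 := by
        apply Real.sin_nonneg_of_nonneg_of_le_pi (by positivity)
        have : (N : ℝ) * τ ≤ 1 := by
          have h2 := (lt_div_iff₀ hNpos).mp hcon
          nlinarith
        nlinarith
      linarith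
    -- upper bound: τ ≤ 3/(2N)
    have hup : τ ≤ 3 / (2 * (N : ℝ)) := by
      have hle : Real.sin (π * τ) ≤ -r := by
        have h1 : Real.sin ((N : ℝ) * π * τ) ≥ -1 := Real.neg_one_le_sin _
        nlinarith
      have hlt : Real.sin (π * τ) < Real.sin (π * (3 / (2 * N))) := by linarith
      by_contra hcon
      push_neg at hcon
      have hmono := Real.strictMonoOn_sin
      have h1 : π * (3 / (2 * (N : ℝ))) ∈ Set.Icc (-(π/2)) (π/2) := by
        constructor
        · have : 0 < π * (3 / (2 * (N : ℝ))) := by positivity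
          linarith
        · have := mul_le_mul_of_nonneg_left hb2 hpi.le
          linarith
      have h2 : π * τ ∈ Set.Icc (-(π/2)) (π/2) := by
        constructor
        · have : 0 < π * τ := by positivity
          linarith
        · have := mul_le_mul_of_nonneg_left hτhalf hpi.le
          linarith
      have hlt2 : π * (3 / (2 * (N : ℝ))) < π * τ := mul_lt_mul_of_pos_left hcon hpi
      have := hmono h1 h2 hlt2
      linarith
    exact ⟨τ, ⟨hlow, hup⟩, heq⟩
end

section
/- Let N ≥ 3 be an odd integer and let r be a real number with r ≤ −1. Then there exists τ ∈ [1/N, 3/(2N)] such that sin(πτ) = r·sin(Nπτ). -/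
open Real

/-- Existence claim of Theorem 2 (case `N_p = N_d + 1`, prograde frame): for odd `N ≥ 3`
and `r ≤ -1`, the equation `sin(πτ) = r·sin(Nπτ)` has a solution `τ ∈ [1/N, 3/(2N)]`. -/
theorem exists_solution_of_r_le_neg_one (N : ℕ) (hN : 3 ≤ N) (hodd : Odd N)
    (r : ℝ) (hr : r ≤ -1) :
    ∃ τ ∈ Set.Icc (1 / (N : ℝ)) (3 / (2 * (N : ℝ))),
      Real.sin (π * τ) = r * Real.sin (N * π * τ) := by
  have hN0 : (0:ℝ) < N := by positivity
  set f : ℝ → ℝ := fun τ => Real.sin (π * τ) - r * Real.sin (N * π * τ) with hf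
  have hab : (1 / (N:ℝ)) ≤ 3 / (2 * (N:ℝ)) := by
    rw [div_le_div_iff₀ hN0 (by positivity)]; linarith
  have hcont : ContinuousOn f (Set.Icc (1 / (N:ℝ)) (3 / (2 * (N:ℝ)))) := by
    fun_prop
  have hfa : 0 ≤ f (1 / (N:ℝ)) := by
    have h1 : (N:ℝ) * π * (1 / N) = π := by field_simp
    have h2 : 0 < Real.sin (π * (1 / N)) := by
      apply Real.sin_pos_of_pos_of_lt_pi
      · positivity
      · rw [mul_one_div]
        exact div_lt_self Real.pi_pos (by exact_mod_cast lt_of_lt_of_le (by norm_num) hN)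
    simp only [hf]
    rw [h1, Real.sin_pi, mul_zero, sub_zero]
    linarith
  have hfb : f (3 / (2 * (N:ℝ))) ≤ 0 := by
    have h1 : (N:ℝ) * π * (3 / (2 * N)) = π + π / 2 := by
      field_simp; ring
    have h2 : Real.sin ((N:ℝ) * π * (3 / (2 * N))) = -1 := by
      rw [h1, Real.sin_add, Real.sin_pi, Real.cos_pi, Real.sin_pi_div_two]; ring
    have h3 : Real.sin (π * (3 / (2 * N))) ≤ 1 := Real.sin_le_one _
    simp only [hf, h2]
    linarith
  have := intermediate_value_Icc' hab hcont
  have h0 : (0:ℝ) ∈ Set.Icc (f (3 / (2 * (N:ℝ)))) (f (1 / (N:ℝ))) := ⟨hfb, hfa⟩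
  obtain ⟨τ, hτ, hfτ⟩ := this h0
  exact ⟨τ, hτ, by simpa [hf, sub_eq_zero] using hfτ⟩
end
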